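/- arXiv:2211.01175 — 10 statements merged into one kernel-verified Lean document; each statement's English description precedes it below -/
import Mathlib

section
/- Let n ≥ 1, let K ⊆ ℝⁿ be a nonempty compact convex set, and let u : K → ℝ be convex and continuous. Then the function δ ↦ ω_u(δ)/δ is antitone (monotonically decreasing) on (0, ∞); equivalently, for all 0 < δ₁ ≤ δ₂ one has ω_u(δ₁)/δ₁ ≥ ω_u(δ₂)/δ₂. -/
open Set Metric MeasureTheory

/-- The modulus of continuity of `u` over the set `A`. -/
noncomputable def modCont {n : ℕ} (A : Set (EuclideanSpace ℝ (Fin n)))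
    (u : EuclideanSpace ℝ (Fin n) → ℝ) (δ : ℝ) : ℝ :=
  sSup {d | ∃ x ∈ A, ∃ y ∈ A, ‖x - y‖ ≤ δ ∧ d = |u x - u y|}

/-- For a continuous convex function on a nonempty compact convex set,
`δ ↦ ω_u(δ)/δ` is antitone on `(0,∞)`. -/
theorem modulus_div_antitone (n : ℕ) (hn : 1 ≤ n)
    (K : Set (EuclideanSpace ℝ (Fin n))) (hKne : K.Nonempty)
    (hKcomp : IsCompact K) (hKconv : Convex ℝ K)
    (u : EuclideanSpace ℝ (Fin n) → ℝ)
    (huconv : ConvexOn ℝ K u) (hucont : ContinuousOn u K) :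
    ∀ δ₁ δ₂ : ℝ, 0 < δ₁ → δ₁ ≤ δ₂ →
      modCont K u δ₂ / δ₂ ≤ modCont K u δ₁ / δ₁ := by
  intro δ₁ δ₂ h1 h12
  have h2 : 0 < δ₂ := lt_of_lt_of_le h1 h12
  obtain ⟨C, hC⟩ := hKcomp.exists_bound_of_continuousOn hucont
  set S : ℝ → Set ℝ := fun δ => {d | ∃ x ∈ K, ∃ y ∈ K, ‖x - y‖ ≤ δ ∧ d = |u x - u y|}
    with hS
  have hbdd : ∀ δ : ℝ, BddAbove (S δ) := by
    intro δ
    refine ⟨2 * C, ?_⟩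
    rintro d ⟨x, hx, y, hy, -, rfl⟩
    calc |u x - u y| ≤ ‖u x‖ + ‖u y‖ := by
          simpa [Real.norm_eq_abs] using norm_sub_le (u x) (u y)
      _ ≤ C + C := add_le_add (hC x hx) (hC y hy)
      _ = 2 * C := by ring
  have hmem0 : ∀ δ : ℝ, 0 ≤ δ → (0 : ℝ) ∈ S δ := by
    intro δ hδ
    obtain ⟨x, hx⟩ := hKne
    exact ⟨x, hx, x, hx, by simpa using hδ, by simp⟩
  have hω1 : (0 : ℝ) ≤ modCont K u δ₁ :=
    le_csSup (hbdd δ₁) (hmem0 δ₁ h1.le)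
  -- key inequality: one-sided estimate
  have key : ∀ x ∈ K, ∀ y ∈ K, ‖x - y‖ ≤ δ₂ →
      u x - u y ≤ (δ₂ / δ₁) * modCont K u δ₁ := by
    intro x hx y hy hxy
    set lam : ℝ := δ₁ / δ₂ with hlam
    have hlam0 : 0 < lam := div_pos h1 h2
    have hlam1 : lam ≤ 1 := (div_le_one h2).mpr h12
    set w : EuclideanSpace ℝ (Fin n) := (1 - lam) • x + lam • y with hw
    have hwK : w ∈ K := hKconv hx hy (by linarith) hlam0.le (by ring)
    have hconv : u w ≤ (1 - lam) * u x + lam * u y :=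
      huconv.2 hx hy (by linarith) hlam0.le (by ring)
    have hdist : ‖x - w‖ ≤ δ₁ := by
      have : x - w = lam • (x - y) := by
        rw [hw]; module
      rw [this, norm_smul, Real.norm_eq_abs, abs_of_pos hlam0]
      calc lam * ‖x - y‖ ≤ lam * δ₂ := by
            exact mul_le_mul_of_nonneg_left hxy hlam0.le
        _ = δ₁ := by rw [hlam]; field_simp
    have hmem : |u x - u w| ∈ S δ₁ := ⟨x, hx, w, hwK, hdist, rfl⟩
    have hle : |u x - u w| ≤ modCont K u δ₁ := le_csSup (hbdd δ₁) hmem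
    have h3 : lam * (u x - u y) ≤ u x - u w := by nlinarith
    have h4 : lam * (u x - u y) ≤ modCont K u δ₁ :=
      le_trans h3 (le_trans (le_abs_self _) hle)
    have h5 := mul_le_mul_of_nonneg_left h4 (div_pos h2 h1).le
    have hid : (δ₂ / δ₁) * (lam * (u x - u y)) = u x - u y := by
      rw [hlam]; field_simp
    rw [← hid]; exact h5
  have hω2 : modCont K u δ₂ ≤ (δ₂ / δ₁) * modCont K u δ₁ := by
    apply Real.sSup_le
    · rintro d ⟨x, hx, y, hy, hxy, rfl⟩
      rw [abs_sub_le_iff]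
      constructor
      · exact key x hx y hy hxy
      · exact key y hy x hx (by rwa [norm_sub_rev])
    · exact mul_nonneg (div_pos h2 h1).le hω1
  calc modCont K u δ₂ / δ₂ ≤ ((δ₂ / δ₁) * modCont K u δ₁) / δ₂ := by gcongr
    _ = modCont K u δ₁ / δ₁ := by field_simp
end

section
/- Let n ≥ 1, let Ω ⊆ ℝⁿ be a nonempty open bounded convex set, and let u : closure(Ω) → ℝ be convex and continuous. Then for every δ ≥ 0, ω_u(δ) = sup{u(x) − u(y) : x ∈ ∂Ω, y ∈ closure(Ω), ‖x − y‖ ≤ δ}, where ∂Ω denotes the frontier of Ω. -/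
open Set Metric MeasureTheory

set_option maxHeartbeats 1000000

/-- For a continuous convex function on the closure of a nonempty open bounded convex set,
the modulus of continuity is attained with one point on the boundary:
`ω_u(δ) = sup {u(x) - u(y) : x ∈ ∂Ω, y ∈ closure Ω, ‖x - y‖ ≤ δ}`. -/
theorem modulus_eq_sup_boundary (n : ℕ) (hn : 1 ≤ n)
    (Ω : Set (EuclideanSpace ℝ (Fin n))) (hne : Ω.Nonempty)
    (hopen : IsOpen Ω) (hbdd : Bornology.IsBounded Ω) (hconv : Convex ℝ Ω)
    (u : EuclideanSpace ℝ (Fin n) → ℝ)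
    (huconv : ConvexOn ℝ (closure Ω) u) (hucont : ContinuousOn u (closure Ω)) :
    ∀ δ : ℝ, 0 ≤ δ →
      modCont (closure Ω) u δ =
        sSup {d | ∃ x ∈ frontier Ω, ∃ y ∈ closure Ω, ‖x - y‖ ≤ δ ∧ d = u x - u y} := by
  intro δ hδ
  haveI : Nontrivial (EuclideanSpace ℝ (Fin n)) := by
    haveI : Nonempty (Fin n) := ⟨⟨0, hn⟩⟩
    infer_instance
  have hclne : (closure Ω).Nonempty := hne.closure
  have hclbdd : Bornology.IsBounded (closure Ω) := hbdd.closure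
  have hcomp : IsCompact (closure Ω) := hbdd.isCompact_closure
  obtain ⟨M, hM⟩ := hcomp.exists_bound_of_continuousOn hucont
  have hΩne_univ : Ω ≠ univ := by
    intro h
    exact NormedSpace.unbounded_univ ℝ (EuclideanSpace ℝ (Fin n)) (h ▸ hbdd)
  obtain ⟨x₀, hx₀⟩ : (frontier Ω).Nonempty := nonempty_frontier_iff.2 ⟨hne, hΩne_univ⟩
  have hx₀cl : x₀ ∈ closure Ω := frontier_subset_closure hx₀
  set S1 := {d | ∃ x ∈ closure Ω, ∃ y ∈ closure Ω, ‖x - y‖ ≤ δ ∧ d = |u x - u y|} with hS1def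
  set S2 := {d | ∃ x ∈ frontier Ω, ∃ y ∈ closure Ω, ‖x - y‖ ≤ δ ∧ d = u x - u y} with hS2def
  have hS1bdd : BddAbove S1 := by
    refine ⟨M + M, ?_⟩
    rintro d ⟨x, hx, y, hy, -, rfl⟩
    calc |u x - u y| ≤ |u x| + |u y| := abs_sub _ _
      _ ≤ M + M := add_le_add (hM x hx) (hM y hy)
  have hS2bdd : BddAbove S2 := by
    refine ⟨M + M, ?_⟩
    rintro d ⟨x, hx, y, hy, -, rfl⟩
    have h1 : u x - u y ≤ |u x - u y| := le_abs_self _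
    have h2 : |u x - u y| ≤ |u x| + |u y| := abs_sub _ _
    have := add_le_add (hM x (frontier_subset_closure hx)) (hM y hy)
    simp only [Real.norm_eq_abs] at *
    linarith
  obtain ⟨z, hz⟩ := hclne
  have hS1ne : S1.Nonempty := ⟨0, z, hz, z, hz, by simp [hδ], by simp⟩
  have h0S2 : (0 : ℝ) ∈ S2 := ⟨x₀, hx₀, x₀, hx₀cl, by simp [hδ], by ring⟩
  have hS2ne : S2.Nonempty := ⟨0, h0S2⟩
  -- Key step: for any x, y in the closure with ‖x - y‖ ≤ δ, u x - u y ≤ sSup S2.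
  have key : ∀ x ∈ closure Ω, ∀ y ∈ closure Ω, ‖x - y‖ ≤ δ → u x - u y ≤ sSup S2 := by
    intro x hx y hy hxy
    by_cases hxyeq : x = y
    · have : u x - u y = 0 := by rw [hxyeq]; ring
      rw [this]
      exact le_csSup hS2bdd h0S2
    set v := x - y with hv
    have hvne : v ≠ 0 := sub_ne_zero.2 hxyeq
    have hvnorm : 0 < ‖v‖ := norm_pos_iff.2 hvne
    set I := {t : ℝ | y + t • v ∈ closure Ω} with hI
    have hIclosed : IsClosed I :=
      isClosed_closure.preimage (by continuity)
    obtain ⟨R, hR⟩ := hclbdd.subset_closedBall 0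
    have hIbddAbove : BddAbove I := by
      refine ⟨(R + ‖y‖) / ‖v‖, ?_⟩
      intro t ht
      have h1 : ‖y + t • v‖ ≤ R := by simpa using hR ht
      have h2 : ‖t • v‖ - ‖y‖ ≤ ‖y + t • v‖ := by
        have := norm_add_le (y + t • v) (-y)
        simp only [norm_neg, add_neg_cancel_comm] at this
        linarith
      have h3 : |t| * ‖v‖ ≤ R + ‖y‖ := by
        rw [← Real.norm_eq_abs, ← norm_smul]
        linarith
      have h4 : t ≤ |t| := le_abs_self t
      rw [le_div_iff₀ hvnorm]
      nlinarith
    have h1I : (1 : ℝ) ∈ I := by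
      simp only [hI, mem_setOf_eq, one_smul, hv]
      simpa using hx
    have hIne : I.Nonempty := ⟨1, h1I⟩
    set T := sSup I with hT
    have hTI : T ∈ I := hIclosed.csSup_mem hIne hIbddAbove
    have hT1 : (1 : ℝ) ≤ T := le_csSup hIbddAbove h1I
    have hTpos : (0 : ℝ) < T := lt_of_lt_of_le one_pos hT1
    set x' := y + T • v with hx'
    have hx'cl : x' ∈ closure Ω := hTI
    have hx'fr : x' ∈ frontier Ω := by
      rw [frontier_eq_closure_inter_closure, hopen.isClosed_compl.closure_eq]
      refine ⟨hx'cl, ?_⟩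
      intro hmem
      obtain ⟨ε, hε, hball⟩ := Metric.isOpen_iff.1 hopen x' hmem
      have htmem : T + ε / (2 * ‖v‖) ∈ I := by
        have : y + (T + ε / (2 * ‖v‖)) • v ∈ ball x' ε := by
          rw [mem_ball, dist_eq_norm]
          have : y + (T + ε / (2 * ‖v‖)) • v - x' = (ε / (2 * ‖v‖)) • v := by
            rw [hx']; module
          rw [this, norm_smul, Real.norm_eq_abs,
            abs_of_pos (by positivity)]
          rw [div_mul_eq_mul_div, mul_comm]
          rw [div_lt_iff₀ (by positivity)]
          nlinarith
        exact subset_closure (hball this)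
      have := le_csSup hIbddAbove htmem
      have hpos : 0 < ε / (2 * ‖v‖) := by positivity
      linarith
    set y' := y + (T - 1) • v with hy'
    have hT0 : T ≠ 0 := ne_of_gt hTpos
    have hTinv : (1/T) * T = 1 := by field_simp
    have hTinv' : (1 - 1/T) * T = T - 1 := by rw [sub_mul, one_mul, hTinv]
    have hsum1 : (1 - 1/T) + 1/T = 1 := by ring
    have hsum2 : (1/T) + (1 - 1/T) = 1 := by ring
    have hcombo1 : x = (1 - 1/T) • y + (1/T) • x' := by
      rw [hx', smul_add, smul_smul, hTinv, ← add_assoc, ← add_smul, hsum1,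
        one_smul, one_smul, hv, add_sub_cancel]
    have hcombo2 : y' = (1/T) • y + (1 - 1/T) • x' := by
      rw [hx', hy', smul_add, smul_smul, hTinv', ← add_assoc, ← add_smul, hsum2, one_smul]
    have ha : (0:ℝ) ≤ 1 - 1/T := by
      rw [sub_nonneg, div_le_one hTpos]; exact hT1
    have hb : (0:ℝ) ≤ 1/T := by positivity
    have hab : (1 - 1/T) + 1/T = 1 := by ring
    have hab' : 1/T + (1 - 1/T) = 1 := by ring
    have hy'cl : y' ∈ closure Ω := by
      rw [hcombo2]
      exact (hconv.closure) hy hx'cl hb ha hab'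
    have hu1 : u x ≤ (1 - 1/T) * u y + (1/T) * u x' := by
      rw [hcombo1]; exact huconv.2 hy hx'cl ha hb hab
    have hu2 : u y' ≤ (1/T) * u y + (1 - 1/T) * u x' := by
      rw [hcombo2]; exact huconv.2 hy hx'cl hb ha hab'
    have hnorm' : ‖x' - y'‖ ≤ δ := by
      have : x' - y' = v := by rw [hx', hy']; module
      rw [this]; exact hxy
    have hmem : u x' - u y' ∈ S2 := ⟨x', hx'fr, y', hy'cl, hnorm', rfl⟩
    have := le_csSup hS2bdd hmem
    linarith
  -- Conclude
  rw [modCont]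
  apply le_antisymm
  · apply csSup_le hS1ne
    rintro d ⟨x, hx, y, hy, hxy, rfl⟩
    rw [abs_sub_le_iff]
    constructor
    · exact key x hx y hy hxy
    · exact key y hy x hx (by rwa [norm_sub_rev])
  · apply csSup_le hS2ne
    rintro d ⟨x, hx, y, hy, hxy, rfl⟩
    have hmem : |u x - u y| ∈ S1 := ⟨x, frontier_subset_closure hx, y, hy, hxy, rfl⟩
    exact le_trans (le_abs_self _) (le_csSup hS1bdd hmem)
end

section
/- Let n ≥ 1, let Ω ⊆ ℝⁿ be a nonempty open bounded convex set, and let u : closure(Ω) → ℝ be convex and continuous with u = 0 on ∂Ω. Then for every δ ≥ 0, ω_u(δ) = sup{−u(y) : y ∈ closure(Ω), dist(y, ∂Ω) ≤ δ}. -/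
open Set Metric MeasureTheory

/-! Being convex and zero on `∂Ω`, `u` is `≤ 0` on `closure Ω` and lies below the chord
`(1 - θ) u(y)` along every segment `y + θ (z - y)` with `z ∈ ∂Ω`. If `‖x - y‖ ≤ δ` and `y` is
farther than `δ` from `∂Ω`, extend the segment from `y` through `x` to a boundary point `z`: the
point `w ∈ [y, z]` at distance `δ` from `z` has `u x - u y ≤ -u w`. Conversely `-u y = |u z - u y|`
for a boundary point `z` nearest to `y`. Thus each of the two sets is cofinal in the other. -/

section

variable {E : Type*} [NormedAddCommGroup E] [NormedSpace ℝ E] {s : Set E}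

lemma Bornology.IsBounded.frontier_nonempty [Nontrivial E] (hs : Bornology.IsBounded s)
    (hne : s.Nonempty) : (frontier s).Nonempty :=
  nonempty_frontier_iff.2 ⟨hne, fun h => NormedSpace.unbounded_univ ℝ E (h ▸ hs)⟩

lemma exists_add_smul_mem_frontier (hs : Bornology.IsBounded s) {y v : E} (hy : y ∈ closure s)
    (hv : v ≠ 0) : ∃ t : ℝ, 0 ≤ t ∧ y + t • v ∈ frontier s := by
  have hcont : Continuous fun t : ℝ => y + t • v := by fun_prop
  set T : Set ℝ := Ici 0 ∩ (fun t : ℝ => y + t • v) ⁻¹' closure s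
  have hT_bdd : BddAbove T := by
    obtain ⟨R, hR⟩ := hs.closure.subset_closedBall y
    refine ⟨R / ‖v‖, fun t ⟨ht0, ht⟩ => ?_⟩
    rw [le_div_iff₀ (norm_pos_iff.2 hv)]
    simpa [dist_eq_norm, norm_smul, abs_of_nonneg (mem_Ici.1 ht0)] using hR ht
  have hT_max : sSup T ∈ T :=
    (isClosed_Ici.inter (isClosed_closure.preimage hcont)).csSup_mem
      ⟨0, mem_Ici.2 le_rfl, by simpa using hy⟩ hT_bdd
  -- the ray leaves `closure s` at parameter `sSup T`, so it cannot be in `interior s` there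
  refine ⟨sSup T, hT_max.1, hT_max.2, fun hint => ?_⟩
  have hnear : ∀ᶠ t in nhdsWithin (sSup T) (Ioi (sSup T)),
      y + t • v ∈ interior s ∧ sSup T < t :=
    (Filter.Eventually.filter_mono nhdsWithin_le_nhds
      (hcont.continuousAt.eventually_mem (isOpen_interior.mem_nhds hint))).and
      self_mem_nhdsWithin
  obtain ⟨t, ht_int, hlt⟩ := hnear.exists
  have htT : t ∈ T := ⟨hT_max.1.trans hlt.le, interior_subset_closure ht_int⟩
  exact (le_csSup hT_bdd htT).not_gt hlt

lemma exists_mem_frontier_mem_segment [Nontrivial E] (hs : Bornology.IsBounded s) {x y : E}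
    (hx : x ∈ closure s) (hy : y ∈ closure s) : ∃ z ∈ frontier s, y ∈ segment ℝ x z := by
  by_cases hxy : y = x
  · obtain ⟨z, hz⟩ := hs.frontier_nonempty (closure_nonempty_iff.1 ⟨x, hx⟩)
    exact ⟨z, hz, hxy ▸ left_mem_segment ℝ x z⟩
  · obtain ⟨t, ht, hz⟩ := exists_add_smul_mem_frontier hs hy (sub_ne_zero.2 hxy)
    refine ⟨_, hz, mem_segment_iff_sameRay.2 ?_⟩
    simpa using SameRay.sameRay_nonneg_smul_right (R := ℝ) (y - x) ht

namespace ConvexOn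

variable {u : E → ℝ}

lemma le_one_sub_mul_of_eq_zero (hu : ConvexOn ℝ s u) {y z : E} (hy : y ∈ s) (hz : z ∈ s)
    (huz : u z = 0) {θ : ℝ} (hθ : θ ∈ Icc (0 : ℝ) 1) :
    u (y + θ • (z - y)) ≤ (1 - θ) * u y := by
  have hcomb : y + θ • (z - y) = (1 - θ) • y + θ • z := by
    rw [smul_sub, sub_smul, one_smul]; abel
  simpa [hcomb, huz] using hu.2 hy hz (sub_nonneg.2 hθ.2) hθ.1 (sub_add_cancel 1 θ)

variable [Nontrivial E]

lemma nonpos_of_eq_zero_on_frontier (hu : ConvexOn ℝ (closure s) u)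
    (hs : Bornology.IsBounded s) (hbc : ∀ z ∈ frontier s, u z = 0) {x : E}
    (hx : x ∈ closure s) : u x ≤ 0 := by
  obtain ⟨z₁, hz₁⟩ := hs.frontier_nonempty (closure_nonempty_iff.1 ⟨x, hx⟩)
  obtain ⟨z₂, hz₂, hxseg⟩ := exists_mem_frontier_mem_segment hs (frontier_subset_closure hz₁) hx
  simpa [hbc _ hz₁, hbc _ hz₂] using
    hu.le_on_segment (frontier_subset_closure hz₁) (frontier_subset_closure hz₂) hxseg

lemma exists_sub_le_neg_of_norm_sub_le (hu : ConvexOn ℝ (closure s) u)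
    (hs : Bornology.IsBounded s) (hbc : ∀ z ∈ frontier s, u z = 0) {x y : E}
    (hx : x ∈ closure s) (hy : y ∈ closure s) {δ : ℝ} (hxy : ‖x - y‖ ≤ δ) :
    ∃ w ∈ closure s, infDist w (frontier s) ≤ δ ∧ u x - u y ≤ -u w := by
  have huy : u y ≤ 0 := hu.nonpos_of_eq_zero_on_frontier hs hbc hy
  rcases le_or_gt (infDist y (frontier s)) δ with hyδ | hyδ
  · exact ⟨y, hy, hyδ, by linarith [hu.nonpos_of_eq_zero_on_frontier hs hbc hx]⟩
  obtain ⟨z, hzF, hxseg⟩ := exists_mem_frontier_mem_segment hs hy hx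
  have hz := frontier_subset_closure hzF
  rw [segment_eq_image'] at hxseg
  obtain ⟨θ, hθ, rfl⟩ := hxseg
  set ℓ := ‖z - y‖
  have hδℓ : δ < ℓ := by
    simpa only [dist_comm y, dist_eq_norm] using hyδ.trans_le (infDist_le_dist_of_mem hzF)
  have hℓ : 0 < ℓ := ((norm_nonneg _).trans hxy).trans_lt hδℓ
  have hθℓ : θ * ℓ ≤ δ := by simpa [norm_smul, abs_of_nonneg hθ.1] using hxy
  set β := δ / ℓ
  have hβ : β ∈ Icc (0 : ℝ) 1 :=
    ⟨div_nonneg ((norm_nonneg _).trans hxy) hℓ.le, (div_le_one hℓ).2 hδℓ.le⟩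
  have h1β : 1 - β ∈ Icc (0 : ℝ) 1 := ⟨sub_nonneg.2 hβ.2, sub_le_self _ hβ.1⟩
  refine ⟨y + (1 - β) • (z - y), hu.1.add_smul_sub_mem hy hz h1β, ?_, ?_⟩
  · have hwz : y + (1 - β) • (z - y) - z = -(β • (z - y)) := by
      rw [sub_smul, one_smul]; abel
    calc infDist (y + (1 - β) • (z - y)) (frontier s) ≤ ‖y + (1 - β) • (z - y) - z‖ :=
          dist_eq_norm (E := E) _ _ ▸ infDist_le_dist_of_mem hzF
      _ = β * ℓ := by rw [hwz, norm_neg, norm_smul, Real.norm_of_nonneg hβ.1]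
      _ = δ := div_mul_cancel₀ δ hℓ.ne'
  · have hux := hu.le_one_sub_mul_of_eq_zero hy hz (hbc z hzF) hθ
    have huw := hu.le_one_sub_mul_of_eq_zero hy hz (hbc z hzF) h1β
    have hθβ : θ * -u y ≤ β * -u y :=
      mul_le_mul_of_nonneg_right ((le_div_iff₀ hℓ).2 hθℓ) (neg_nonneg.2 huy)
    linarith

lemma exists_abs_sub_le_neg_of_norm_sub_le (hu : ConvexOn ℝ (closure s) u)
    (hs : Bornology.IsBounded s) (hbc : ∀ z ∈ frontier s, u z = 0) {x y : E}
    (hx : x ∈ closure s) (hy : y ∈ closure s) {δ : ℝ} (hxy : ‖x - y‖ ≤ δ) :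
    ∃ w ∈ closure s, infDist w (frontier s) ≤ δ ∧ |u x - u y| ≤ -u w := by
  obtain ⟨w, hw, hwδ, hxyw⟩ := hu.exists_sub_le_neg_of_norm_sub_le hs hbc hx hy hxy
  obtain ⟨w', hw', hw'δ, hyxw'⟩ :=
    hu.exists_sub_le_neg_of_norm_sub_le hs hbc hy hx (norm_sub_rev x y ▸ hxy)
  rcases le_total (-u w) (-u w') with h | h
  · exact ⟨w', hw', hw'δ, abs_sub_le_iff.2 ⟨hxyw.trans h, hyxw'⟩⟩
  · exact ⟨w, hw, hwδ, abs_sub_le_iff.2 ⟨hxyw, hyxw'.trans h⟩⟩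

end ConvexOn

end

theorem modulus_eq_sup_neg_general (n : ℕ) (hn : 1 ≤ n)
    (Ω : Set (EuclideanSpace ℝ (Fin n)))
    (hbdd : Bornology.IsBounded Ω)
    (u : EuclideanSpace ℝ (Fin n) → ℝ)
    (huconv : ConvexOn ℝ (closure Ω) u)
    (hbc : ∀ x ∈ frontier Ω, u x = 0) :
    ∀ δ : ℝ, 0 ≤ δ →
      modCont (closure Ω) u δ =
        sSup {d | ∃ y ∈ closure Ω, infDist y (frontier Ω) ≤ δ ∧ d = -u y} := by
  intro δ _
  have : Nonempty (Fin n) := ⟨⟨0, hn⟩⟩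
  refine csSup_eq_csSup_of_forall_exists_le ?_ ?_
  · rintro _ ⟨x, hx, y, hy, hxy, rfl⟩
    obtain ⟨w, hw, hwδ, hxyw⟩ := huconv.exists_abs_sub_le_neg_of_norm_sub_le hbdd hbc hx hy hxy
    exact ⟨-u w, ⟨w, hw, hwδ, rfl⟩, hxyw⟩
  · rintro _ ⟨y, hy, hyδ, rfl⟩
    obtain ⟨z, hzF, hzy⟩ := isClosed_frontier.exists_infDist_eq_dist
      (hbdd.frontier_nonempty (closure_nonempty_iff.1 ⟨y, hy⟩)) y
    refine ⟨_, ⟨z, frontier_subset_closure hzF, y, hy, ?_, rfl⟩, ?_⟩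
    · rwa [← dist_eq_norm, dist_comm, ← hzy]
    · rw [hbc z hzF, zero_sub, abs_neg]
      exact neg_le_abs _

/-- For a continuous convex function vanishing on the boundary of a nonempty open bounded
convex set, `ω_u(δ) = sup {-u(y) : y ∈ closure Ω, dist(y, ∂Ω) ≤ δ}`. -/
theorem modulus_eq_sup_neg (n : ℕ) (hn : 1 ≤ n)
    (Ω : Set (EuclideanSpace ℝ (Fin n))) (hne : Ω.Nonempty)
    (hopen : IsOpen Ω) (hbdd : Bornology.IsBounded Ω) (hconv : Convex ℝ Ω)
    (u : EuclideanSpace ℝ (Fin n) → ℝ)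
    (huconv : ConvexOn ℝ (closure Ω) u) (hucont : ContinuousOn u (closure Ω))
    (hbc : ∀ x ∈ frontier Ω, u x = 0) :
    ∀ δ : ℝ, 0 ≤ δ →
      modCont (closure Ω) u δ =
        sSup {d | ∃ y ∈ closure Ω, infDist y (frontier Ω) ≤ δ ∧ d = -u y} :=
  modulus_eq_sup_neg_general n hn Ω hbdd u huconv hbc
end

section
/- Let n ≥ 1, let Ω ⊆ ℝⁿ be a nonempty open bounded convex set, let u : closure(Ω) → ℝ be convex and continuous, and let v : closure(Ω) → ℝ be a continuous function with u ≥ v on Ω and u = v on ∂Ω. Then ω_u(δ) ≤ ω_v(δ) for every δ ≥ 0 (comparison principle for the modulus of continuity). -/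
open Set Metric MeasureTheory

/-- Comparison principle for the modulus of continuity: if a continuous convex function `u`
lies above a continuous (not necessarily convex) minorant `v` in `Ω` and agrees with it on
`∂Ω`, then `ω_u ≤ ω_v`. -/
theorem modulus_comparison (n : ℕ) (hn : 1 ≤ n)
    (Ω : Set (EuclideanSpace ℝ (Fin n))) (hne : Ω.Nonempty)
    (hopen : IsOpen Ω) (hbdd : Bornology.IsBounded Ω) (hconv : Convex ℝ Ω)
    (u v : EuclideanSpace ℝ (Fin n) → ℝ)
    (huconv : ConvexOn ℝ (closure Ω) u) (hucont : ContinuousOn u (closure Ω))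
    (hvcont : ContinuousOn v (closure Ω))
    (hge : ∀ x ∈ Ω, v x ≤ u x)
    (heq : ∀ x ∈ frontier Ω, u x = v x) :
    ∀ δ : ℝ, 0 ≤ δ → modCont (closure Ω) u δ ≤ modCont (closure Ω) v δ := by
  intro δ hδ
  obtain ⟨x0, hx0⟩ := hne
  have hx0c : x0 ∈ closure Ω := subset_closure hx0
  have hK : IsCompact (closure Ω) := hbdd.isCompact_closure
  obtain ⟨C, hC⟩ := hK.exists_bound_of_continuousOn hvcont
  have hBdd : BddAbove {d | ∃ x ∈ closure Ω, ∃ y ∈ closure Ω, ‖x - y‖ ≤ δ ∧ d = |v x - v y|} := by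
    refine ⟨2 * C, ?_⟩
    rintro d ⟨x, hx, y, hy, -, rfl⟩
    have h1 := hC x hx
    have h2 := hC y hy
    rw [Real.norm_eq_abs] at h1 h2
    calc |v x - v y| ≤ |v x| + |v y| := abs_sub _ _
      _ ≤ 2 * C := by linarith
  have hzero : 0 ≤ modCont (closure Ω) v δ := by
    apply le_csSup hBdd
    exact ⟨x0, hx0c, x0, hx0c, by simpa using hδ, by simp⟩
  have hvle : ∀ w ∈ closure Ω, v w ≤ u w := by
    intro w hw
    rw [closure_eq_interior_union_frontier, hopen.interior_eq] at hw
    rcases hw with hw | hw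
    · exact hge w hw
    · exact (heq w hw).ge
  have key : ∀ x ∈ closure Ω, ∀ y ∈ closure Ω, ‖x - y‖ ≤ δ →
      u x - u y ≤ modCont (closure Ω) v δ := by
    intro x hx y hy hxy
    by_cases hxy0 : x = y
    · simpa [hxy0] using hzero
    · set d := x - y with hd_def
      have hd : d ≠ 0 := sub_ne_zero.mpr hxy0
      have hdn : 0 < ‖d‖ := norm_pos_iff.mpr hd
      set S := {t : ℝ | 1 ≤ t ∧ y + t • d ∈ closure Ω} with hS_def
      have hS1 : (1:ℝ) ∈ S := by
        constructor
        · exact le_refl 1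
        · simpa [hd_def] using hx
      obtain ⟨R, hR⟩ := hbdd.closure.subset_closedBall 0
      have hSbdd : BddAbove S := by
        refine ⟨(R + ‖y‖) / ‖d‖, ?_⟩
        rintro t ⟨ht1, htm⟩
        have h1 : ‖y + t • d‖ ≤ R := by simpa [dist_eq_norm] using hR htm
        have h2 : ‖t • d‖ ≤ ‖y + t • d‖ + ‖y‖ := by
          have := norm_add_le (y + t • d) (-y)
          simpa [add_assoc] using this
        rw [norm_smul, Real.norm_eq_abs, abs_of_nonneg (by linarith : (0:ℝ) ≤ t)] at h2
        rw [le_div_iff₀ hdn]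
        linarith
      have hScl : IsClosed S := by
        have hc : Continuous fun t : ℝ => y + t • d :=
          continuous_const.add (continuous_id.smul continuous_const)
        exact (isClosed_le continuous_const continuous_id).inter
          (isClosed_closure.preimage hc)
      set t := sSup S with ht_def
      have htS : t ∈ S := hScl.csSup_mem ⟨1, hS1⟩ hSbdd
      have ht1 : 1 ≤ t := htS.1
      have ht0 : t ≠ 0 := by positivity
      set z := y + t • d with hz_def
      have hzc : z ∈ closure Ω := htS.2
      have hznΩ : z ∉ Ω := by
        intro hz
        obtain ⟨ε, hε, hball⟩ := Metric.isOpen_iff.mp hopen z hz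
        have hη : 0 < ε / (2 * ‖d‖) := by positivity
        have hmul : ε / (2 * ‖d‖) * ‖d‖ = ε / 2 := by field_simp
        have ht'S : t + ε / (2 * ‖d‖) ∈ S := by
          constructor
          · show (1:ℝ) ≤ t + ε / (2 * ‖d‖)
            linarith
          · apply subset_closure
            apply hball
            have hdiff : y + (t + ε / (2 * ‖d‖)) • d - z = (ε / (2 * ‖d‖)) • d := by
              rw [hz_def, add_smul]; abel
            rw [mem_ball, dist_eq_norm, hdiff, norm_smul, Real.norm_eq_abs,
              abs_of_nonneg hη.le, hmul]
            linarith
        have hle : t + ε / (2 * ‖d‖) ≤ t := le_csSup hSbdd ht'S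
        linarith
      have hzf : z ∈ frontier Ω := by
        rw [frontier, hopen.interior_eq]
        exact ⟨hzc, hznΩ⟩
      set w := y + (t - 1) • d with hw_def
      have hti : 0 ≤ t⁻¹ := by positivity
      have hti1 : t⁻¹ ≤ 1 := by
        rw [inv_le_one_iff₀]; right; linarith
      have htit : t⁻¹ * t = 1 := inv_mul_cancel₀ ht0
      have heq1 : (1 - t⁻¹) • y + t⁻¹ • z = x := by
        rw [hz_def, smul_add, smul_smul, htit, one_smul, hd_def]
        module
      have heq2 : t⁻¹ • y + (1 - t⁻¹) • z = w := by
        rw [hz_def, hw_def, smul_add, smul_smul]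
        have : (1 - t⁻¹) * t = t - 1 := by field_simp
        rw [this]
        module
      have h1 : u x ≤ (1 - t⁻¹) * u y + t⁻¹ * u z := by
        have := huconv.2 hy hzc (by linarith : (0:ℝ) ≤ 1 - t⁻¹) hti (by ring)
        rwa [heq1] at this
      have h2 : u w ≤ t⁻¹ * u y + (1 - t⁻¹) * u z := by
        have := huconv.2 hy hzc hti (by linarith : (0:ℝ) ≤ 1 - t⁻¹) (by ring)
        rwa [heq2] at this
      have hwc : w ∈ closure Ω := by
        rw [← heq2]
        exact hconv.closure hy hzc hti (by linarith) (by ring)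
      have hsum : u x + u w ≤ u y + u z := by
        calc u x + u w ≤ ((1 - t⁻¹) * u y + t⁻¹ * u z) + (t⁻¹ * u y + (1 - t⁻¹) * u z) :=
              add_le_add h1 h2
          _ = u y + u z := by ring
      have hzw : z - w = d := by
        rw [hz_def, hw_def]
        module
      have hvw : v w ≤ u w := hvle w hwc
      have huz : u z = v z := heq z hzf
      have hvd : v z - v w ≤ |v z - v w| := le_abs_self _
      have hmem : |v z - v w| ∈ {d | ∃ x ∈ closure Ω, ∃ y ∈ closure Ω, ‖x - y‖ ≤ δ ∧ d = |v x - v y|} :=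
        ⟨z, hzc, w, hwc, by rw [hzw]; exact hxy, rfl⟩
      have := le_csSup hBdd hmem
      unfold modCont
      linarith
  apply Real.sSup_le _ hzero
  rintro d ⟨x, hx, y, hy, hxy, rfl⟩
  rw [abs_sub_le_iff]
  exact ⟨key x hx y hy hxy, key y hy x hx (by rwa [norm_sub_rev])⟩
end

section
/- Let n ≥ 1, let Ω ⊆ ℝⁿ be a nonempty open bounded convex set, let u : closure(Ω) → ℝ be convex and continuous, let x ∈ Ω, and let p ∈ ℝⁿ be a subgradient of u at x, i.e. u(y) ≥ u(x) + ⟨p, y − x⟩ for all y ∈ closure(Ω). Then ‖p‖ ≤ sup{|u(y) − u(x)|/‖y − x‖ : y ∈ ∂Ω} ≤ ω_u(dist(x, ∂Ω)) / dist(x, ∂Ω). -/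
open Set Metric MeasureTheory
open scoped RealInnerProductSpace

/-- Bound for a subgradient `p` of a continuous convex function `u` at an interior point `x`:
`‖p‖ ≤ sup {|u(y)-u(x)| / ‖y-x‖ : y ∈ ∂Ω} ≤ ω_u(dist(x,∂Ω)) / dist(x,∂Ω)`. -/
lemma ray_frontier {n : ℕ} (Ω : Set (EuclideanSpace ℝ (Fin n)))
    (hopen : IsOpen Ω) (hbdd : Bornology.IsBounded Ω)
    (x : EuclideanSpace ℝ (Fin n)) (hx : x ∈ Ω)
    (v : EuclideanSpace ℝ (Fin n)) (hv : ‖v‖ = 1) :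
    ∃ t : ℝ, 0 < t ∧ x + t • v ∈ frontier Ω := by
  set T : Set ℝ := {t : ℝ | 0 ≤ t ∧ x + t • v ∈ Ω} with hT
  have hmem : ∀ t, t ∈ T ↔ 0 ≤ t ∧ x + t • v ∈ Ω := fun t => Iff.rfl
  have h0 : (0 : ℝ) ∈ T := by simp [hT, hx]
  have hTne : T.Nonempty := ⟨0, h0⟩
  obtain ⟨R, hR⟩ := hbdd.subset_closedBall x
  have hTbdd : BddAbove T := by
    refine ⟨R, fun t ht => ?_⟩
    have := hR ht.2
    have hd : dist (x + t • v) x = t := by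
      rw [dist_eq_norm]
      simp [norm_smul, hv, abs_of_nonneg ht.1]
    simpa [mem_closedBall, hd] using this
  set t := sSup T with htdef
  obtain ⟨ε, hε, hball⟩ := Metric.isOpen_iff.1 hopen x hx
  have htpos : 0 < t := by
    have hmem2 : ε / 2 ∈ T := by
      refine ⟨by positivity, hball ?_⟩
      rw [mem_ball, dist_eq_norm]
      have he : x + (ε / 2) • v - x = (ε / 2) • v := by abel
      rw [he, norm_smul, hv, Real.norm_eq_abs, abs_of_nonneg (by positivity : (0:ℝ) ≤ ε/2)]
      linarith
    have := le_csSup hTbdd hmem2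
    linarith
  refine ⟨t, htpos, ?_⟩
  have hycl : x + t • v ∈ closure Ω := by
    have h1 : t ∈ closure T := csSup_mem_closure hTne hTbdd
    have hc : Continuous (fun s : ℝ => x + s • v) := by continuity
    have h2 : (fun s : ℝ => x + s • v) '' closure T ⊆ closure ((fun s : ℝ => x + s • v) '' T) :=
      image_closure_subset_closure_image hc
    have h3 : (fun s : ℝ => x + s • v) '' T ⊆ Ω := by
      rintro _ ⟨s, hs, rfl⟩; exact hs.2
    exact closure_mono h3 (h2 ⟨t, h1, rfl⟩)
  have hynot : x + t • v ∉ Ω := by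
    intro hy
    obtain ⟨δ, hδ, hball'⟩ := Metric.isOpen_iff.1 hopen _ hy
    have : t + δ / 2 ∈ T := by
      refine ⟨by linarith, hball' ?_⟩
      rw [mem_ball, dist_eq_norm]
      have : x + (t + δ / 2) • v - (x + t • v) = (δ / 2) • v := by
        rw [add_smul]; abel
      rw [this]
      rw [norm_smul, hv, Real.norm_eq_abs, abs_of_nonneg (by positivity : (0:ℝ) ≤ δ/2)]
      linarith
    have := le_csSup hTbdd this
    linarith
  rw [hopen.frontier_eq]
  exact ⟨hycl, hynot⟩


/-- Bound -/
theorem subgradient_bound (n : ℕ) (hn : 1 ≤ n)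
    (Ω : Set (EuclideanSpace ℝ (Fin n))) (hne : Ω.Nonempty)
    (hopen : IsOpen Ω) (hbdd : Bornology.IsBounded Ω) (hconv : Convex ℝ Ω)
    (u : EuclideanSpace ℝ (Fin n) → ℝ)
    (huconv : ConvexOn ℝ (closure Ω) u) (hucont : ContinuousOn u (closure Ω))
    (x : EuclideanSpace ℝ (Fin n)) (hx : x ∈ Ω)
    (p : EuclideanSpace ℝ (Fin n))
    (hp : ∀ y ∈ closure Ω, u x + ⟪p, y - x⟫ ≤ u y) :
    ‖p‖ ≤ sSup {d | ∃ y ∈ frontier Ω, d = |u y - u x| / ‖y - x‖} ∧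
      sSup {d | ∃ y ∈ frontier Ω, d = |u y - u x| / ‖y - x‖} ≤
        modCont (closure Ω) u (infDist x (frontier Ω)) / infDist x (frontier Ω) := by
  have hxcl : x ∈ closure Ω := subset_closure hx
  -- frontier is nonempty
  have hfne : (frontier Ω).Nonempty := by
    obtain ⟨t, ht, hmem⟩ := ray_frontier Ω hopen hbdd x hx
      (EuclideanSpace.single (⟨0, hn⟩ : Fin n) (1 : ℝ)) (by simp)
    exact ⟨_, hmem⟩
  set r := infDist x (frontier Ω) with hrdef
  have hrpos : 0 < r := by
    rw [hrdef, ← isClosed_frontier.notMem_iff_infDist_pos hfne]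
    intro h
    rw [hopen.frontier_eq] at h
    exact h.2 hx
  set M := modCont (closure Ω) u r with hMdef
  -- modulus of continuity bound
  have hK : IsCompact (closure Ω) := hbdd.isCompact_closure
  obtain ⟨C, hC⟩ := hK.exists_bound_of_continuousOn hucont
  have modu : ∀ a ∈ closure Ω, ∀ b ∈ closure Ω, ‖a - b‖ ≤ r → |u a - u b| ≤ M := by
    intro a ha b hb hab
    have hbddA : BddAbove {d | ∃ z ∈ closure Ω, ∃ w ∈ closure Ω, ‖z - w‖ ≤ r ∧ d = |u z - u w|} := by
      refine ⟨2 * C, ?_⟩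
      rintro _ ⟨z, hz, w, hw, -, rfl⟩
      have h1 := hC z hz
      have h2 := hC w hw
      rw [Real.norm_eq_abs] at h1 h2
      calc |u z - u w| ≤ |u z| + |u w| := abs_sub _ _
        _ ≤ 2 * C := by linarith
    rw [hMdef]
    unfold modCont
    exact le_csSup hbddA ⟨a, ha, b, hb, hab, rfl⟩
  have hM0 : 0 ≤ M := by
    have := modu x hxcl x hxcl (by simp [hrpos.le])
    simpa using this
  -- key pointwise bound on the frontier
  have key : ∀ y ∈ frontier Ω, |u y - u x| / ‖y - x‖ ≤ M / r := by
    intro y hy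
    have hycl : y ∈ closure Ω := frontier_subset_closure hy
    set d := ‖y - x‖ with hddef
    have hrd : r ≤ d := by
      calc r ≤ dist x y := infDist_le_dist_of_mem hy
        _ = d := by rw [dist_eq_norm, norm_sub_rev]
    have hdpos : 0 < d := lt_of_lt_of_le hrpos hrd
    set a : ℝ := r / d with hadef
    have ha0 : 0 ≤ a := by positivity
    have ha1 : a ≤ 1 := by rw [hadef, div_le_one hdpos]; exact hrd
    have hccl : Convex ℝ (closure Ω) := hconv.closure
    rcases le_total (u x) (u y) with h | h
    · -- z near y
      have hzcl : a • x + (1 - a) • y ∈ closure Ω :=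
        hccl hxcl hycl ha0 (by linarith) (by ring)
      have hcvx := huconv.2 hxcl hycl ha0 (by linarith : (0:ℝ) ≤ 1 - a) (by ring)
      have hnorm : ‖y - (a • x + (1 - a) • y)‖ = r := by
        have he : y - (a • x + (1 - a) • y) = a • (y - x) := by module
        rw [he, norm_smul, Real.norm_eq_abs, abs_of_nonneg ha0, ← hddef, hadef]
        field_simp
      have hmod := modu y hycl _ hzcl (le_of_eq hnorm)
      have habs : u y - u (a • x + (1 - a) • y) ≤ |u y - u (a • x + (1 - a) • y)| := le_abs_self _
      rw [abs_of_nonneg (by linarith), div_le_div_iff₀ hdpos hrpos]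
      have har : a * d = r := by rw [hadef]; field_simp
      simp only [smul_eq_mul] at hcvx
      have h3 : a * (u y - u x) ≤ M := by nlinarith
      have h4 := mul_le_mul_of_nonneg_right h3 hdpos.le
      nlinarith [h4, har]
    · -- w near x
      have hwcl : (1 - a) • x + a • y ∈ closure Ω :=
        hccl hxcl hycl (by linarith) ha0 (by ring)
      have hcvx := huconv.2 hxcl hycl (by linarith : (0:ℝ) ≤ 1 - a) ha0 (by ring)
      have hnorm : ‖x - ((1 - a) • x + a • y)‖ = r := by
        have he : x - ((1 - a) • x + a • y) = a • (x - y) := by module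
        rw [he, norm_smul, Real.norm_eq_abs, abs_of_nonneg ha0, norm_sub_rev, ← hddef, hadef]
        field_simp
      have hmod := modu x hxcl _ hwcl (le_of_eq hnorm)
      have habs : u x - u ((1 - a) • x + a • y) ≤ |u x - u ((1 - a) • x + a • y)| := le_abs_self _
      rw [abs_of_nonpos (by linarith), div_le_div_iff₀ hdpos hrpos]
      have har : a * d = r := by rw [hadef]; field_simp
      simp only [smul_eq_mul] at hcvx
      have h3 : a * (u x - u y) ≤ M := by nlinarith
      have h4 := mul_le_mul_of_nonneg_right h3 hdpos.le
      nlinarith [h4, har]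
  set S := {d | ∃ y ∈ frontier Ω, d = |u y - u x| / ‖y - x‖} with hSdef
  have hSbdd : BddAbove S := by
    refine ⟨M / r, ?_⟩
    rintro _ ⟨y, hy, rfl⟩
    exact key y hy
  constructor
  · -- ‖p‖ ≤ sSup S
    rcases eq_or_ne p 0 with rfl | hp0
    · obtain ⟨y, hy⟩ := hfne
      have hel : |u y - u x| / ‖y - x‖ ∈ S := ⟨y, hy, rfl⟩
      have h0 : (0:ℝ) ≤ |u y - u x| / ‖y - x‖ := by positivity
      calc ‖(0 : EuclideanSpace ℝ (Fin n))‖ = 0 := norm_zero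
        _ ≤ |u y - u x| / ‖y - x‖ := h0
        _ ≤ sSup S := le_csSup hSbdd hel
    · set v := ‖p‖⁻¹ • p with hvdef
      have hpn : (0:ℝ) < ‖p‖ := norm_pos_iff.mpr hp0
      have hv : ‖v‖ = 1 := by
        rw [hvdef, norm_smul, Real.norm_eq_abs, abs_of_nonneg (by positivity)]
        field_simp
      obtain ⟨t, ht, hyfr⟩ := ray_frontier Ω hopen hbdd x hx v hv
      set y := x + t • v with hydef
      have hycl : y ∈ closure Ω := frontier_subset_closure hyfr
      have hyx : y - x = t • v := by rw [hydef]; abel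
      have hnyx : ‖y - x‖ = t := by
        rw [hyx, norm_smul, hv, Real.norm_eq_abs, abs_of_nonneg ht.le, mul_one]
      have hinner : ⟪p, y - x⟫ = t * ‖p‖ := by
        rw [hyx, hvdef, real_inner_smul_right, real_inner_smul_right,
          real_inner_self_eq_norm_sq]
        field_simp
      have hle := hp y hycl
      rw [hinner] at hle
      have h1 : ‖p‖ ≤ (u y - u x) / t := by
        rw [le_div_iff₀ ht]
        nlinarith
      have h2 : (u y - u x) / t ≤ |u y - u x| / ‖y - x‖ := by
        rw [hnyx]
        gcongr
        exact le_abs_self _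
      have hel : |u y - u x| / ‖y - x‖ ∈ S := ⟨y, hyfr, rfl⟩
      exact le_trans h1 (le_trans h2 (le_csSup hSbdd hel))
  · -- sSup S ≤ M / r
    refine Real.sSup_le ?_ (by positivity)
    rintro _ ⟨y, hy, rfl⟩
    exact key y hy
end

section
/- Let n ≥ 1, let Ω ⊆ ℝⁿ be an open bounded convex set, let x, y ∈ ∂Ω and z, w ∈ Ω satisfy ‖x − z‖ = dist(z, ∂Ω) and ‖y − w‖ = dist(w, ∂Ω). Then ‖z − w‖² ≤ ‖x − y‖² + (‖x − z‖ − ‖y − w‖)². In other words, the map sending a pair (boundary point, distance) to the corresponding nearest interior point is 1-Lipschitz with respect to the metric on ∂Ω × ℝ induced by the Euclidean norm on ℝ^{n+1}. -/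
/-!
The ball of radius `r = ‖x - z‖` about `z` lies in `Ω` and touches `∂Ω` at `x`, so by convexity
`Ω` lies in the half-space `{u | 0 ≤ ⟪u - x, z - x⟫}`: otherwise the segment from a point of `Ω`
to a point of the ball just beyond `x` would pass through `x ∉ Ω`. Applied to the ball of radius
`s = ‖y - w‖` about `w`, this gives `r * s ≤ ⟪w - x, z - x⟫`; the half-space at `y`, applied to
`x ∈ closure Ω`, gives `0 ≤ ⟪x - y, w - y⟫`. Expanding `‖z - w‖²`, these two inequalities are
exactly what is needed.
-/

open Set Metric RealInnerProductSpace

lemma IsOpen.ball_infDist_frontier_subset {E : Type*} [SeminormedAddCommGroup E]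
    [NormedSpace ℝ E] {Ω : Set E} (hΩ : IsOpen Ω) {z : E} (hz : z ∈ Ω) :
    ball z (infDist z (frontier Ω)) ⊆ Ω := by
  rcases (ball z (infDist z (frontier Ω))).eq_empty_or_nonempty with hempty | hne
  · simp [hempty]
  refine (convex_ball z _).isPreconnected.subset_of_closure_inter_subset hΩ
    ⟨z, mem_ball_self (nonempty_ball.mp hne), hz⟩ fun p ⟨hpcl, hp⟩ => ?_
  by_contra hpΩ
  exact notMem_of_dist_lt_infDist (mem_ball'.mp hp) ⟨hpcl, hΩ.interior_eq.symm ▸ hpΩ⟩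

section InnerProductSpace

variable {E : Type*} [NormedAddCommGroup E] [InnerProductSpace ℝ E]

lemma exists_mem_ball_mem_segment_of_inner_neg {x z u : E} (h : ⟪u - x, z - x⟫ < 0) :
    ∃ q ∈ ball z ‖x - z‖, x ∈ segment ℝ u q := by
  have hux : u - x ≠ 0 := by rintro h0; simp [h0] at h
  set μ := -⟪u - x, z - x⟫ / ‖u - x‖ ^ 2
  have hμ : 0 < μ := div_pos (neg_pos.2 h) (by positivity)
  have hμN : μ * ‖u - x‖ ^ 2 = -⟪u - x, z - x⟫ := div_mul_cancel₀ _ (by positivity)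
  refine ⟨x + μ • (x - u), ?_, mem_segment_iff_sameRay.2 ?_⟩
  · have hsq : ‖x + μ • (x - u) - z‖ ^ 2 < ‖x - z‖ ^ 2 := by
      rw [show x + μ • (x - u) - z = (x - z) + μ • (x - u) by abel, norm_add_sq_real,
        norm_smul, real_inner_smul_right, norm_sub_rev x u,
        show ⟪x - z, x - u⟫ = ⟪u - x, z - x⟫ by
          rw [← neg_sub z x, ← neg_sub u x, inner_neg_neg, real_inner_comm]]
      rw [Real.norm_eq_abs, abs_of_pos hμ]
      nlinarith
    rw [mem_ball, dist_eq_norm]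
    exact lt_of_pow_lt_pow_left₀ 2 (norm_nonneg _) hsq
  · rw [add_sub_cancel_left]
    exact SameRay.sameRay_pos_smul_right _ hμ

lemma Convex.inner_sub_nonneg_of_ball_subset {Ω : Set E} (hconv : Convex ℝ Ω) {x z : E}
    (hx : x ∉ Ω) (hball : ball z ‖x - z‖ ⊆ Ω) {u : E} (hu : u ∈ closure Ω) :
    0 ≤ ⟪u - x, z - x⟫ := by
  refine closure_minimal (fun u hu => not_lt.1 fun h => ?_)
    (isClosed_le continuous_const (by fun_prop : Continuous fun u => ⟪u - x, z - x⟫)) hu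
  obtain ⟨q, hq, hxq⟩ := exists_mem_ball_mem_segment_of_inner_neg h
  exact hx (hconv.segment_subset hu (hball hq) hxq)

lemma mul_norm_le_inner_of_forall_closedBall {v w x : E} {s : ℝ} (hs : 0 ≤ s)
    (h : ∀ u ∈ closedBall w s, 0 ≤ ⟪u - x, v⟫) : s * ‖v‖ ≤ ⟪w - x, v⟫ := by
  rcases eq_or_ne v 0 with rfl | hv
  · simp
  have hv' : ‖v‖ ≠ 0 := norm_ne_zero_iff.2 hv
  have hu : w - (s / ‖v‖) • v ∈ closedBall w s := by
    rw [mem_closedBall, dist_eq_norm, sub_sub_cancel_left, norm_neg, norm_smul,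
      Real.norm_eq_abs, abs_of_nonneg (by positivity), div_mul_cancel₀ _ hv']
  have hinner := h _ hu
  rw [sub_right_comm, inner_sub_left, real_inner_smul_left, real_inner_self_eq_norm_sq] at hinner
  calc s * ‖v‖ = s / ‖v‖ * ‖v‖ ^ 2 := by field_simp
    _ ≤ ⟪w - x, v⟫ := by linarith

lemma norm_sub_sq_le_of_inner {x y z w : E} (hx : ‖y - w‖ * ‖z - x‖ ≤ ⟪w - x, z - x⟫)
    (hy : 0 ≤ ⟪x - y, w - y⟫) : ‖z - w‖ ^ 2 ≤ ‖x - y‖ ^ 2 + (‖x - z‖ - ‖y - w‖) ^ 2 := by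
  rw [show w - x = (w - y) - (x - y) by abel, inner_sub_left, norm_sub_rev y w] at hx
  rw [show z - w = (z - x) - (w - y) + (x - y) by abel, norm_add_sq_real, norm_sub_sq_real,
    inner_sub_left (z - x), norm_sub_rev x z, norm_sub_rev y w]
  linarith [real_inner_comm (z - x) (w - y), real_inner_comm (z - x) (x - y),
    real_inner_comm (w - y) (x - y)]

end InnerProductSpace

theorem proximum_lipschitz_general (n : ℕ)
    (Ω : Set (EuclideanSpace ℝ (Fin n)))
    (hopen : IsOpen Ω) (hconv : Convex ℝ Ω)
    (x y z w : EuclideanSpace ℝ (Fin n))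
    (hx : x ∈ frontier Ω) (hy : y ∈ frontier Ω) (hz : z ∈ Ω) (hw : w ∈ Ω)
    (hxz : ‖x - z‖ = infDist z (frontier Ω))
    (hyw : ‖y - w‖ = infDist w (frontier Ω)) :
    ‖z - w‖ ^ 2 ≤ ‖x - y‖ ^ 2 + (‖x - z‖ - ‖y - w‖) ^ 2 := by
  have hxΩ : x ∉ Ω := (disjoint_frontier_iff_isOpen.2 hopen).notMem_of_mem_left hx
  have hyΩ : y ∉ Ω := (disjoint_frontier_iff_isOpen.2 hopen).notMem_of_mem_left hy
  have hballz : ball z ‖x - z‖ ⊆ Ω := hxz ▸ hopen.ball_infDist_frontier_subset hz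
  have hballw : ball w ‖y - w‖ ⊆ Ω := hyw ▸ hopen.ball_infDist_frontier_subset hw
  have hclosedBallw : closedBall w ‖y - w‖ ⊆ closure Ω := by
    rw [← closure_ball w (norm_sub_pos_iff.2 (ne_of_mem_of_not_mem hw hyΩ).symm).ne']
    exact closure_mono hballw
  refine norm_sub_sq_le_of_inner ?_ (hconv.inner_sub_nonneg_of_ball_subset hyΩ hballw hx.1)
  exact mul_norm_le_inner_of_forall_closedBall (norm_nonneg _) fun u hu =>
    hconv.inner_sub_nonneg_of_ball_subset hxΩ hballz (hclosedBallw hu)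

/-- The map sending a pair (boundary point, distance) to the corresponding nearest interior
point is 1-Lipschitz: if `x, y ∈ ∂Ω` realize the boundary distances of `z, w ∈ Ω`
respectively, then `‖z - w‖² ≤ ‖x - y‖² + (‖x - z‖ - ‖y - w‖)²`. -/
theorem proximum_lipschitz (n : ℕ) (hn : 1 ≤ n)
    (Ω : Set (EuclideanSpace ℝ (Fin n)))
    (hopen : IsOpen Ω) (hbdd : Bornology.IsBounded Ω) (hconv : Convex ℝ Ω)
    (x y z w : EuclideanSpace ℝ (Fin n))
    (hx : x ∈ frontier Ω) (hy : y ∈ frontier Ω) (hz : z ∈ Ω) (hw : w ∈ Ω)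
    (hxz : ‖x - z‖ = infDist z (frontier Ω))
    (hyw : ‖y - w‖ = infDist w (frontier Ω)) :
    ‖z - w‖ ^ 2 ≤ ‖x - y‖ ^ 2 + (‖x - z‖ - ‖y - w‖) ^ 2 :=
  proximum_lipschitz_general n Ω hopen hconv x y z w hx hy hz hw hxz hyw
end

section
/- Let n ≥ 2, let a : ℝ → ℝ be twice differentiable at a point x₁ ∈ (0, 1), let b(x') := ‖x'‖²/2 − 1 for x' ∈ ℝ^{n−1}, and define w(x₁, x') := a(x₁)·b(x') on (0,1) × ℝ^{n−1}. Then at every point (x₁, x') of the domain, the determinant of the Hessian matrix of w equals a''(x₁)·b(x')·a(x₁)^{n−1} − a'(x₁)²·‖x'‖²·a(x₁)^{n−2}. -/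
open Set Metric MeasureTheory

/-- The first coordinate `x₁` of `x ∈ ℝⁿ`. -/
noncomputable def coord0 {n : ℕ} (x : EuclideanSpace ℝ (Fin n)) : ℝ :=
  ∑ i : Fin n, if (i : ℕ) = 0 then x i else 0

/-- The squared norm `‖x'‖²` of the remaining coordinates `x' = (x₂, …, xₙ)`. -/
noncomputable def sqTail {n : ℕ} (x : EuclideanSpace ℝ (Fin n)) : ℝ :=
  ∑ i : Fin n, if (i : ℕ) = 0 then 0 else x i ^ 2

/-- The determinant of the Hessian matrix of `w` at `x`. -/
noncomputable def hessDet {n : ℕ} (w : EuclideanSpace ℝ (Fin n) → ℝ)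
    (x : EuclideanSpace ℝ (Fin n)) : ℝ :=
  (Matrix.of fun i j : Fin n =>
    fderiv ℝ (fun y => fderiv ℝ w y (EuclideanSpace.single i 1)) x
      (EuclideanSpace.single j 1)).det

/-!
At a point with `x₁ ∈ (0, 1)` the Hessian of `w = a(x₁)·b(x')` is an arrowhead matrix: its
corner entry is `a''·b`, the rest of its first row and column is `a'·x'`, and since `b` has the
identity as Hessian in `x'`, the remaining block is `a·I`. Bordering `c·I` by a corner `α` and a
row and a column `u` gives determinant `α·c^(n-1) - ‖u‖²·c^(n-2)` (a Schur complement when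
`c ≠ 0`, by continuity in `c` otherwise), which is the formula with `α = a''·b`, `u = a'·x'` and
`c = a`.
-/

open Matrix Filter Topology

section Arrowhead

theorem det_fromBlocks_replicateRow_replicateCol_smul_one (k : ℕ) (α c : ℝ)
    (u v : Fin (k + 1) → ℝ) :
    (fromBlocks (of fun _ _ : Unit => α) (replicateRow Unit u) (replicateCol Unit v)
      (c • 1 : Matrix (Fin (k + 1)) (Fin (k + 1)) ℝ)).det = α * c ^ (k + 1) - (u ⬝ᵥ v) * c ^ k := by
  have h_of_ne : ∀ c : ℝ, c ≠ 0 → (fromBlocks (of fun _ _ : Unit => α) (replicateRow Unit u)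
      (replicateCol Unit v) (c • 1 : Matrix (Fin (k + 1)) (Fin (k + 1)) ℝ)).det =
        α * c ^ (k + 1) - (u ⬝ᵥ v) * c ^ k := by
    intro c hc
    have hfactor : fromBlocks (of fun _ _ : Unit => α) (replicateRow Unit u) (replicateCol Unit v)
        (c • 1 : Matrix (Fin (k + 1)) (Fin (k + 1)) ℝ) =
        fromBlocks (of fun _ _ : Unit => α) (c⁻¹ • replicateRow Unit u) (replicateCol Unit v) 1 *
          fromBlocks 1 0 0 (c • 1) := by
      simp [fromBlocks_multiply, smul_smul, hc]
    rw [hfactor, det_mul, det_fromBlocks_one₂₂, det_fromBlocks_zero₁₂]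
    simp only [smul_mul, replicateRow_mul_replicateCol, smul_of, of_sub_of, det_unique,
      PUnit.default_eq_unit, of_apply, Pi.sub_apply, Pi.smul_apply, smul_eq_mul, one_apply_eq,
      det_smul_of_tower, Fintype.card_fin, det_one, mul_one, one_mul]
    field_simp
    ring
  have hcont : Continuous fun c : ℝ => (fromBlocks (of fun _ _ : Unit => α) (replicateRow Unit u)
      (replicateCol Unit v) (c • 1 : Matrix (Fin (k + 1)) (Fin (k + 1)) ℝ)).det :=
    (continuous_const.matrix_fromBlocks continuous_const continuous_const
      (continuous_id.smul continuous_const)).matrix_det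
  exact congrFun (hcont.ext_on (dense_compl_singleton 0) (by fun_prop) h_of_ne) c

theorem det_eq_of_arrowhead {k : ℕ} (M : Matrix (Fin (k + 2)) (Fin (k + 2)) ℝ) (α c : ℝ)
    (u v : Fin (k + 1) → ℝ) (h₀₀ : M 0 0 = α) (h₀ₛ : ∀ j, M 0 j.succ = u j)
    (hₛ₀ : ∀ i, M i.succ 0 = v i)
    (hₛₛ : ∀ i j : Fin (k + 1), M i.succ j.succ = if i = j then c else 0) :
    M.det = α * c ^ (k + 1) - (u ⬝ᵥ v) * c ^ k := by
  let e : Unit ⊕ Fin (k + 1) ≃ Fin (k + 2) :=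
    ((Equiv.sumComm _ _).trans (Equiv.optionEquivSumPUnit _).symm).trans (finSuccEquiv _).symm
  have hblocks : M.submatrix e e = fromBlocks (of fun _ _ : Unit => α) (replicateRow Unit u)
      (replicateCol Unit v) (c • 1) := by
    ext (_ | i) (_ | j) <;> simp [e, h₀₀, h₀ₛ, hₛ₀, hₛₛ, one_apply]
  rw [← det_submatrix_equiv_self e, hblocks, det_fromBlocks_replicateRow_replicateCol_smul_one]

end Arrowhead

noncomputable def partialDeriv {n : ℕ} (i : Fin n) (f : EuclideanSpace ℝ (Fin n) → ℝ)
    (y : EuclideanSpace ℝ (Fin n)) : ℝ :=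
  fderiv ℝ f y (EuclideanSpace.single i 1)

theorem hessDet_eq_det_partialDeriv {n : ℕ} (w : EuclideanSpace ℝ (Fin n) → ℝ)
    (x : EuclideanSpace ℝ (Fin n)) :
    hessDet w x = (of fun i j => partialDeriv j (partialDeriv i w) x).det :=
  rfl

section PartialDeriv

variable {n : ℕ} {f g : EuclideanSpace ℝ (Fin n) → ℝ} {y : EuclideanSpace ℝ (Fin n)}

theorem Filter.EventuallyEq.partialDeriv_eq (h : f =ᶠ[𝓝 y] g) (i : Fin n) :
    partialDeriv i f y = partialDeriv i g y := by
  rw [partialDeriv, h.fderiv_eq, partialDeriv]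

theorem partialDeriv_coord (i j : Fin n) :
    partialDeriv j (fun z => z i) y = if i = j then 1 else 0 := by
  simp [partialDeriv, (PiLp.hasFDerivAt_apply (𝕜 := ℝ) 2 y i).fderiv, PiLp.single_apply]

theorem partialDeriv_mul (hf : DifferentiableAt ℝ f y) (hg : DifferentiableAt ℝ g y)
    (j : Fin n) :
    partialDeriv j (fun z => f z * g z) y =
      partialDeriv j f y * g y + f y * partialDeriv j g y := by
  simp only [partialDeriv, fderiv_fun_mul hf hg, _root_.add_apply, _root_.smul_apply, smul_eq_mul]
  ring

variable {φ : ℝ → ℝ} {φ' : ℝ} {i : Fin n}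

theorem HasDerivAt.differentiableAt_comp_coord (hφ : HasDerivAt φ φ' (y i)) :
    DifferentiableAt ℝ (fun z : EuclideanSpace ℝ (Fin n) => φ (z i)) y :=
  hφ.differentiableAt.comp y (PiLp.hasFDerivAt_apply (𝕜 := ℝ) 2 y i).differentiableAt

theorem HasDerivAt.partialDeriv_comp_coord (hφ : HasDerivAt φ φ' (y i)) (j : Fin n) :
    partialDeriv j (fun z => φ (z i)) y = if i = j then φ' else 0 := by
  have hcomp : HasFDerivAt (fun z => φ (z i)) (φ' • EuclideanSpace.proj (𝕜 := ℝ) i) y :=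
    hφ.comp_hasFDerivAt y (PiLp.hasFDerivAt_apply 2 y i)
  simp [partialDeriv, hcomp.fderiv, PiLp.single_apply]

end PartialDeriv

section SqTail

variable {m : ℕ}

theorem coord0_eq (y : EuclideanSpace ℝ (Fin (m + 1))) : coord0 y = y 0 := by
  simp [coord0]

theorem sqTail_eq_sum_succ (y : EuclideanSpace ℝ (Fin (m + 1))) :
    sqTail y = ∑ i : Fin m, y i.succ ^ 2 := by
  simp [sqTail, Fin.sum_univ_succ]

theorem sqTail_eq_norm_sq_sub (y : EuclideanSpace ℝ (Fin (m + 1))) :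
    sqTail y = ‖y‖ ^ 2 - y 0 ^ 2 := by
  simp [sqTail_eq_sum_succ, EuclideanSpace.norm_sq_eq, Fin.sum_univ_succ]

theorem differentiable_sqTail : Differentiable ℝ (sqTail (n := m + 1)) := by
  rw [funext sqTail_eq_norm_sq_sub]
  exact (differentiable_id.norm_sq ℝ).sub (by fun_prop)

theorem partialDeriv_sqTail_div_two_sub_one (y : EuclideanSpace ℝ (Fin (m + 1)))
    (j : Fin (m + 1)) :
    partialDeriv j (fun z => sqTail z / 2 - 1) y = if j = 0 then 0 else y j := by
  have h := (((hasStrictFDerivAt_norm_sq y).hasFDerivAt.fun_sub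
    ((PiLp.hasFDerivAt_apply (𝕜 := ℝ) 2 y 0).pow 2)).mul_const 2⁻¹).sub_const 1
  simp only [← sqTail_eq_norm_sq_sub, ← div_eq_mul_inv] at h
  rw [partialDeriv, h.fderiv]
  by_cases hj : j = 0 <;> simp [EuclideanSpace.inner_single_right, hj, eq_comm]

theorem partialDeriv_coord_zero_mul_sqTail {φ φ' : ℝ → ℝ} {y : EuclideanSpace ℝ (Fin (m + 1))}
    (hφ : HasDerivAt φ (φ' (y 0)) (y 0)) (j : Fin (m + 1)) :
    partialDeriv j (fun z => φ (z 0) * (sqTail z / 2 - 1)) y =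
      if j = 0 then φ' (y 0) * (sqTail y / 2 - 1) else φ (y 0) * y j := by
  have hb : DifferentiableAt ℝ (fun z => sqTail z / 2 - 1) y := by
    have := differentiable_sqTail (m := m)
    fun_prop
  rw [partialDeriv_mul hφ.differentiableAt_comp_coord hb, hφ.partialDeriv_comp_coord,
    partialDeriv_sqTail_div_two_sub_one]
  by_cases hj : j = 0 <;> simp [hj, eq_comm]

theorem partialDeriv_partialDeriv_coord_zero_mul_sqTail {a a' a'' : ℝ → ℝ}
    {x : EuclideanSpace ℝ (Fin (m + 1))} (ha : ∀ᶠ y in 𝓝 x, HasDerivAt a (a' (y 0)) (y 0))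
    (ha' : HasDerivAt a' (a'' (x 0)) (x 0)) (i j : Fin (m + 1)) :
    partialDeriv j (partialDeriv i fun z => a (z 0) * (sqTail z / 2 - 1)) x =
      if i = 0 then (if j = 0 then a'' (x 0) * (sqTail x / 2 - 1) else a' (x 0) * x j)
      else if j = 0 then a' (x 0) * x i else if i = j then a (x 0) else 0 := by
  have hfirst : partialDeriv i (fun z => a (z 0) * (sqTail z / 2 - 1)) =ᶠ[𝓝 x]
      if i = 0 then fun y => a' (y 0) * (sqTail y / 2 - 1) else fun y => a (y 0) * y i :=
    ha.mono fun y hy => by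
      rw [partialDeriv_coord_zero_mul_sqTail hy]
      split_ifs <;> rfl
  rw [hfirst.partialDeriv_eq]
  by_cases hi : i = 0
  · simp only [hi, if_true]
    exact partialDeriv_coord_zero_mul_sqTail ha' j
  · have ha₀ := ha.self_of_nhds
    simp only [hi, if_false]
    rw [partialDeriv_mul ha₀.differentiableAt_comp_coord
      (PiLp.hasFDerivAt_apply (𝕜 := ℝ) 2 x i).differentiableAt, ha₀.partialDeriv_comp_coord,
      partialDeriv_coord]
    by_cases hj : j = 0 <;> simp [hi, hj, eq_comm]

end SqTail

/-- For `w(x₁, x') = a(x₁)·b(x')` with `b(x') = ‖x'‖²/2 - 1` and `a` twice differentiable,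
the Hessian determinant is
`a''(x₁)·b(x')·a(x₁)^{n-1} - a'(x₁)²·‖x'‖²·a(x₁)^{n-2}`. -/
theorem hessDet_product_formula (n : ℕ) (hn : 2 ≤ n) (a a' a'' : ℝ → ℝ)
    (ha' : ∀ t ∈ Ioo (0 : ℝ) 1, HasDerivAt a (a' t) t)
    (ha'' : ∀ t ∈ Ioo (0 : ℝ) 1, HasDerivAt a' (a'' t) t) :
    ∀ x : EuclideanSpace ℝ (Fin n), coord0 x ∈ Ioo (0 : ℝ) 1 →
      hessDet (fun y => a (coord0 y) * (sqTail y / 2 - 1)) x =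
        a'' (coord0 x) * (sqTail x / 2 - 1) * a (coord0 x) ^ (n - 1) -
          a' (coord0 x) ^ 2 * sqTail x * a (coord0 x) ^ (n - 2) := by
  obtain ⟨m, rfl⟩ : ∃ m, n = m + 2 := ⟨n - 2, by omega⟩
  intro x hx
  simp only [coord0_eq] at hx ⊢
  have hnear : ∀ᶠ y in 𝓝 x, HasDerivAt a (a' (y 0)) (y 0) :=
    ((PiLp.continuous_apply 2 _ 0).continuousAt.eventually_mem (isOpen_Ioo.mem_nhds hx)).mono
      fun y hy => ha' _ hy
  have hHess := partialDeriv_partialDeriv_coord_zero_mul_sqTail hnear (ha'' _ hx)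
  let u : Fin (m + 1) → ℝ := fun i => a' (x 0) * x i.succ
  have hdot : u ⬝ᵥ u = a' (x 0) ^ 2 * sqTail x := by
    simp only [u, dotProduct, sqTail_eq_sum_succ, Finset.mul_sum]
    exact Finset.sum_congr rfl fun i _ => by ring
  rw [hessDet_eq_det_partialDeriv,
    det_eq_of_arrowhead _ (a'' (x 0) * (sqTail x / 2 - 1)) (a (x 0)) u u, hdot,
    show m + 2 - 1 = m + 1 by omega, show m + 2 - 2 = m by omega]
  all_goals simp [u, hHess, Fin.succ_ne_zero]
end

section
/- Let ε ∈ (0, 1/2], set ρ := √(ε/2), and define w_ε : [0,1] × [−ρ, ρ] → ℝ by w_ε(x₁, x₂) := x₁^{1−ε}·(x₂²/2 − 1) (with w_ε(0, x₂) := 0). Then w_ε is convex on [0,1] × [−ρ, ρ], and for every (x₁, x₂) ∈ (0,1) × (−ρ, ρ) the determinant of the Hessian of w_ε satisfies det D²w_ε(x₁, x₂) ≥ ε/4. -/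
open Set Metric MeasureTheory

/-!
Write `w_ε(x) = a(x₀) b(x₁)` with `a(s) = s^(1-ε)` and `b(t) = t²/2 - 1`. Its Hessian is
`[[a''b, a'b'], [a'b', ab'']]`, with determinant `(1-ε)(ε - (1-ε/2)x₁²) x₀^(-2ε)`; for `x₁² ≤ ε/2`
this is at least `ε/4 · x₀^(-2ε) ≥ ε/4` when `ε ≤ 1/2` and `x₀ ≤ 1`. As `ab'' = x₀^(1-ε) > 0`, the
Hessian is positive semidefinite where `x₀ > 0`, so `w_ε` is convex along every segment whose
interior lies in `x₀ > 0`; the other segments lie on the edge `x₀ = 0`, where `w_ε` vanishes.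
-/

open Filter Topology

local notation "ℝ²" => EuclideanSpace ℝ (Fin 2)

theorem quadratic_form_nonneg {A B C : ℝ} (hC : 0 < C) (hdet : B ^ 2 ≤ A * C) (u v : ℝ) :
    0 ≤ A * u ^ 2 + 2 * B * u * v + C * v ^ 2 := by
  nlinarith [sq_nonneg (B * u + C * v), mul_nonneg (sub_nonneg.2 hdet) (sq_nonneg u)]

theorem convexOn_of_convexOn_segment {E : Type*} [AddCommGroup E] [Module ℝ E] {s : Set E}
    {f : E → ℝ} (hs : Convex ℝ s)
    (h : ∀ x ∈ s, ∀ y ∈ s, ConvexOn ℝ (Icc 0 1) (fun τ : ℝ => f (x + τ • (y - x)))) :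
    ConvexOn ℝ s f := by
  refine ⟨hs, fun x hx y hy a b ha hb hab => ?_⟩
  have hseg := (h x hx y hy).2 (left_mem_Icc.2 zero_le_one) (right_mem_Icc.2 zero_le_one)
    ha hb hab
  have hxy : a • x + b • y = x + (a • 0 + b • 1 : ℝ) • (y - x) := by
    rw [eq_sub_of_add_eq hab]
    module
  simpa [hxy] using hseg

section SeparableProduct

variable {a a' a'' b b' b'' : ℝ → ℝ}

theorem hasDerivAt_mul_comp_affine {p u q v τ α β : ℝ} (ha : HasDerivAt a α (p + τ * u))
    (hb : HasDerivAt b β (q + τ * v)) :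
    HasDerivAt (fun τ => a (p + τ * u) * b (q + τ * v))
      (u * (α * b (q + τ * v)) + v * (a (p + τ * u) * β)) τ := by
  have hP : HasDerivAt (fun τ => p + τ * u) u τ :=
    (((hasDerivAt_id' τ).mul_const u).const_add p).congr_deriv (one_mul u)
  have hQ : HasDerivAt (fun τ => q + τ * v) v τ :=
    (((hasDerivAt_id' τ).mul_const v).const_add q).congr_deriv (one_mul v)
  exact ((ha.comp τ hP).mul (hb.comp τ hQ)).congr_deriv (by simp only [Function.comp_apply]; ring)

theorem convexOn_Icc_mul_comp_affine {U V : Set ℝ} {p u q v : ℝ}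
    (hcont : ContinuousOn (fun τ => a (p + τ * u) * b (q + τ * v)) (Icc 0 1))
    (hmem : ∀ τ ∈ Ioo (0 : ℝ) 1, p + τ * u ∈ U ∧ q + τ * v ∈ V)
    (ha : ∀ s ∈ U, HasDerivAt a (a' s) s) (ha' : ∀ s ∈ U, HasDerivAt a' (a'' s) s)
    (hb : ∀ t ∈ V, HasDerivAt b (b' t) t) (hb' : ∀ t ∈ V, HasDerivAt b' (b'' t) t)
    (hpos : ∀ s ∈ U, ∀ t ∈ V, 0 < a s * b'' t)
    (hdet : ∀ s ∈ U, ∀ t ∈ V, (a' s * b' t) ^ 2 ≤ a'' s * b t * (a s * b'' t)) :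
    ConvexOn ℝ (Icc 0 1) (fun τ => a (p + τ * u) * b (q + τ * v)) := by
  refine convexOn_of_hasDerivWithinAt2_nonneg (convex_Icc 0 1) hcont
    (f' := fun τ => u * (a' (p + τ * u) * b (q + τ * v)) + v * (a (p + τ * u) * b' (q + τ * v)))
    (f'' := fun τ => u * (u * (a'' (p + τ * u) * b (q + τ * v))
        + v * (a' (p + τ * u) * b' (q + τ * v)))
      + v * (u * (a' (p + τ * u) * b' (q + τ * v)) + v * (a (p + τ * u) * b'' (q + τ * v))))
    ?_ ?_ ?_ <;> rw [interior_Icc] <;> intro τ hτ <;> obtain ⟨hP, hQ⟩ := hmem τ hτ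
  · exact (hasDerivAt_mul_comp_affine (ha _ hP) (hb _ hQ)).hasDerivWithinAt
  · exact (((hasDerivAt_mul_comp_affine (ha' _ hP) (hb _ hQ)).const_mul u).add
      ((hasDerivAt_mul_comp_affine (ha _ hP) (hb' _ hQ)).const_mul v)).hasDerivWithinAt
  · convert quadratic_form_nonneg (hpos _ hP _ hQ) (hdet _ hP _ hQ) u v using 1
    ring

theorem hasFDerivAt_mul_comp_coord {y : ℝ²} {α β : ℝ} (ha : HasDerivAt a α (y 0))
    (hb : HasDerivAt b β (y 1)) :
    HasFDerivAt (fun y : ℝ² => a (y 0) * b (y 1))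
      (a (y 0) • β • EuclideanSpace.proj 1 + b (y 1) • α • EuclideanSpace.proj 0 : ℝ² →L[ℝ] ℝ) y :=
  (ha.comp_hasFDerivAt y (EuclideanSpace.proj (𝕜 := ℝ) 0).hasFDerivAt).mul
    (hb.comp_hasFDerivAt y (EuclideanSpace.proj (𝕜 := ℝ) 1).hasFDerivAt)

theorem fderiv_mul_comp_coord_single_zero {y : ℝ²} {α β : ℝ} (ha : HasDerivAt a α (y 0))
    (hb : HasDerivAt b β (y 1)) :
    fderiv ℝ (fun y : ℝ² => a (y 0) * b (y 1)) y (EuclideanSpace.single 0 1) = α * b (y 1) := by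
  simp [(hasFDerivAt_mul_comp_coord ha hb).fderiv, mul_comm]

theorem fderiv_mul_comp_coord_single_one {y : ℝ²} {α β : ℝ} (ha : HasDerivAt a α (y 0))
    (hb : HasDerivAt b β (y 1)) :
    fderiv ℝ (fun y : ℝ² => a (y 0) * b (y 1)) y (EuclideanSpace.single 1 1) = a (y 0) * β := by
  simp [(hasFDerivAt_mul_comp_coord ha hb).fderiv]

theorem hessDet_mul_comp_coord {U V : Set ℝ} (hU : IsOpen U) (hV : IsOpen V)
    (ha : ∀ s ∈ U, HasDerivAt a (a' s) s) (ha' : ∀ s ∈ U, HasDerivAt a' (a'' s) s)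
    (hb : ∀ t ∈ V, HasDerivAt b (b' t) t) (hb' : ∀ t ∈ V, HasDerivAt b' (b'' t) t)
    {x : ℝ²} (hx₀ : x 0 ∈ U) (hx₁ : x 1 ∈ V) :
    hessDet (fun y : ℝ² => a (y 0) * b (y 1)) x =
      a'' (x 0) * b (x 1) * (a (x 0) * b'' (x 1)) - (a' (x 0) * b' (x 1)) ^ 2 := by
  have hnhds : ∀ᶠ y : ℝ² in 𝓝 x, y 0 ∈ U ∧ y 1 ∈ V :=
    ((hU.preimage (EuclideanSpace.proj 0).continuous).inter
      (hV.preimage (EuclideanSpace.proj 1).continuous)).mem_nhds ⟨hx₀, hx₁⟩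
  have h₀ : (fun y : ℝ² => fderiv ℝ (fun y : ℝ² => a (y 0) * b (y 1)) y
      (EuclideanSpace.single 0 1)) =ᶠ[𝓝 x] fun y => a' (y 0) * b (y 1) :=
    hnhds.mono fun y hy => fderiv_mul_comp_coord_single_zero (ha _ hy.1) (hb _ hy.2)
  have h₁ : (fun y : ℝ² => fderiv ℝ (fun y : ℝ² => a (y 0) * b (y 1)) y
      (EuclideanSpace.single 1 1)) =ᶠ[𝓝 x] fun y => a (y 0) * b' (y 1) :=
    hnhds.mono fun y hy => fderiv_mul_comp_coord_single_one (ha _ hy.1) (hb _ hy.2)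
  rw [hessDet, Matrix.det_fin_two]
  simp only [Matrix.of_apply]
  rw [h₀.fderiv_eq, h₁.fderiv_eq,
    fderiv_mul_comp_coord_single_zero (ha' _ hx₀) (hb _ hx₁),
    fderiv_mul_comp_coord_single_one (ha' _ hx₀) (hb _ hx₁),
    fderiv_mul_comp_coord_single_zero (ha _ hx₀) (hb' _ hx₁),
    fderiv_mul_comp_coord_single_one (ha _ hx₀) (hb' _ hx₁)]
  ring

end SeparableProduct

theorem convex_setOf_coord_mem {S T : Set ℝ} (hS : Convex ℝ S) (hT : Convex ℝ T) :
    Convex ℝ {x : ℝ² | x 0 ∈ S ∧ x 1 ∈ T} :=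
  (hS.linear_preimage (EuclideanSpace.proj (𝕜 := ℝ) (0 : Fin 2)).toLinearMap).inter
    (hT.linear_preimage (EuclideanSpace.proj (𝕜 := ℝ) (1 : Fin 2)).toLinearMap)

noncomputable def hessFactor (ε t : ℝ) : ℝ := (1 - ε) * (ε - (1 - ε / 2) * t ^ 2)

theorem hessFactor_nonneg {ε t : ℝ} (hε : ε ≤ 1) (ht : t ^ 2 ≤ ε / 2) : 0 ≤ hessFactor ε t := by
  have hε₀ : 0 ≤ ε := by nlinarith [sq_nonneg t]
  exact mul_nonneg (by linarith) (by nlinarith [mul_nonneg hε₀ (sq_nonneg t)])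

theorem quarter_le_hessFactor {ε t : ℝ} (hε : ε ≤ 1 / 2) (ht : t ^ 2 ≤ ε / 2) :
    ε / 4 ≤ hessFactor ε t := by
  have hε₀ : 0 ≤ ε := by nlinarith [sq_nonneg t]
  have hhalf : ε / 2 ≤ ε - (1 - ε / 2) * t ^ 2 := by nlinarith [mul_nonneg hε₀ (sq_nonneg t)]
  unfold hessFactor
  nlinarith [mul_nonneg (by linarith : (0 : ℝ) ≤ 1 - ε) (sub_nonneg.2 hhalf),
    mul_nonneg (by linarith : (0 : ℝ) ≤ 1 / 2 - ε) hε₀]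

section Rpow

variable {ε s : ℝ}

theorem hasDerivAt_rpow_one_sub (hs : 0 < s) :
    HasDerivAt (fun s => s ^ (1 - ε)) ((1 - ε) * s ^ (-ε)) s := by
  simpa using Real.hasDerivAt_rpow_const (p := 1 - ε) (Or.inl hs.ne')

theorem hasDerivAt_mul_rpow_neg (hs : 0 < s) :
    HasDerivAt (fun s => (1 - ε) * s ^ (-ε)) ((1 - ε) * (-ε * s ^ (-ε - 1))) s :=
  (Real.hasDerivAt_rpow_const (Or.inl hs.ne')).const_mul (1 - ε)

theorem rpow_hessian_det_eq_hessFactor_mul (t : ℝ) (hs : 0 < s) :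
    (1 - ε) * (-ε * s ^ (-ε - 1)) * (t ^ 2 / 2 - 1) * (s ^ (1 - ε) * 1)
      - ((1 - ε) * s ^ (-ε) * t) ^ 2 = hessFactor ε t * (s ^ (-ε)) ^ 2 := by
  have hpow : s ^ (-ε - 1) * s ^ (1 - ε) = (s ^ (-ε)) ^ 2 := by
    rw [← Real.rpow_add hs, sq, ← Real.rpow_add hs]
    ring_nf
  unfold hessFactor
  linear_combination (1 - ε) * (-ε) * (t ^ 2 / 2 - 1) * hpow

end Rpow

theorem hasDerivAt_half_sq_sub_one (t : ℝ) : HasDerivAt (fun t : ℝ => t ^ 2 / 2 - 1) t t := by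
  simpa using ((hasDerivAt_pow 2 t).div_const 2).sub_const 1

theorem convexOn_rpow_mul_half_sq_sub_one {ε ρ : ℝ} (hε : ε < 1) (hρ : ρ ^ 2 ≤ ε / 2) :
    ConvexOn ℝ {x : ℝ² | x 0 ∈ Ici 0 ∧ x 1 ∈ Icc (-ρ) ρ}
      (fun x => x 0 ^ (1 - ε) * (x 1 ^ 2 / 2 - 1)) := by
  refine convexOn_of_convexOn_segment (convex_setOf_coord_mem (convex_Ici 0) (convex_Icc _ _))
    fun x hx y hy => ?_
  simp only [PiLp.add_apply, PiLp.smul_apply, PiLp.sub_apply, smul_eq_mul]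
  by_cases hdeg : x 0 = 0 ∧ y 0 = 0
  · simp only [hdeg.1, hdeg.2, sub_zero, mul_zero, add_zero,
      Real.zero_rpow (sub_ne_zero.2 hε.ne'), zero_mul]
    exact convexOn_const 0 (convex_Icc 0 1)
  have hpos : 0 < x 0 ∨ 0 < y 0 := by
    by_contra! h
    exact hdeg ⟨le_antisymm h.1 hx.1, le_antisymm h.2 hy.1⟩
  refine convexOn_Icc_mul_comp_affine (U := Ioi 0) (V := Icc (-ρ) ρ)
    (a := fun s => s ^ (1 - ε)) (b := fun t => t ^ 2 / 2 - 1) (b' := fun t => t)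
    (b'' := fun _ => 1) ?_ (fun τ hτ => ⟨?_, ?_⟩) (fun s hs => hasDerivAt_rpow_one_sub hs)
    (fun s hs => hasDerivAt_mul_rpow_neg hs) (fun t _ => hasDerivAt_half_sq_sub_one t)
    (fun t _ => hasDerivAt_id' t) (fun s hs _ _ => by simpa using Real.rpow_pos_of_pos hs _)
    (fun s hs t ht => sub_nonneg.1 ?_)
  · exact (((Real.continuous_rpow_const (by linarith)).comp (by fun_prop)).mul
      (by fun_prop)).continuousOn
  · have hx₀ : 0 ≤ x 0 := hx.1
    have hy₀ : 0 ≤ y 0 := hy.1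
    rw [mem_Ioi]
    rcases hpos with h | h
    · nlinarith [mul_pos (sub_pos.2 hτ.2) h, mul_nonneg hτ.1.le hy₀]
    · nlinarith [mul_pos hτ.1 h, mul_nonneg (sub_pos.2 hτ.2).le hx₀]
  · exact (convex_Icc (-ρ) ρ).add_smul_mem hx.2 (by simpa using hy.2) (Ioo_subset_Icc_self hτ)
  · rw [rpow_hessian_det_eq_hessFactor_mul t hs]
    exact mul_nonneg (hessFactor_nonneg hε.le ((sq_le_sq' ht.1 ht.2).trans hρ)) (sq_nonneg _)

theorem hessDet_rpow_mul_half_sq_sub_one {ε : ℝ} {x : ℝ²} (hx : 0 < x 0) :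
    hessDet (fun y : ℝ² => y 0 ^ (1 - ε) * (y 1 ^ 2 / 2 - 1)) x
      = hessFactor ε (x 1) * (x 0 ^ (-ε)) ^ 2 := by
  rw [hessDet_mul_comp_coord (a := fun s => s ^ (1 - ε)) (b := fun t => t ^ 2 / 2 - 1)
    (b' := fun t => t) (b'' := fun _ => 1) isOpen_Ioi isOpen_univ
    (fun s hs => hasDerivAt_rpow_one_sub hs) (fun s hs => hasDerivAt_mul_rpow_neg hs)
    (fun t _ => hasDerivAt_half_sq_sub_one t) (fun t _ => hasDerivAt_id' t) hx (mem_univ _)]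
  exact rpow_hessian_det_eq_hessFactor_mul (x 1) hx

/-- For `ε ∈ (0, 1/2]` and `ρ = √(ε/2)`, the function
`w_ε(x₁, x₂) = x₁^{1-ε}·(x₂²/2 - 1)` is convex on `[0,1] × [-ρ, ρ]` and its Hessian
determinant is at least `ε/4` on `(0,1) × (-ρ, ρ)`. -/
theorem convex_and_hessDet_lower_bound_dim_two
    (ε : ℝ) (hε : ε ∈ Ioc (0 : ℝ) (1 / 2)) (ρ : ℝ) (hρ : ρ = Real.sqrt (ε / 2)) :
    ConvexOn ℝ {x : EuclideanSpace ℝ (Fin 2) | x 0 ∈ Icc (0 : ℝ) 1 ∧ x 1 ∈ Icc (-ρ) ρ}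
        (fun x => x 0 ^ (1 - ε) * (x 1 ^ 2 / 2 - 1)) ∧
      ∀ x : EuclideanSpace ℝ (Fin 2), x 0 ∈ Ioo (0 : ℝ) 1 → x 1 ∈ Ioo (-ρ) ρ →
        ε / 4 ≤ hessDet (fun y => y 0 ^ (1 - ε) * (y 1 ^ 2 / 2 - 1)) x := by
  obtain ⟨hε₀, hε₁⟩ := hε
  have hρ₂ : ρ ^ 2 = ε / 2 := hρ ▸ Real.sq_sqrt (by linarith)
  refine ⟨(convexOn_rpow_mul_half_sq_sub_one (by linarith) hρ₂.le).subset
    (fun x hx => ⟨hx.1.1, hx.2⟩) (convex_setOf_coord_mem (convex_Icc 0 1) (convex_Icc _ _)),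
    fun x hx₀ hx₁ => ?_⟩
  have hx₁' : x 1 ^ 2 ≤ ε / 2 := hρ₂ ▸ sq_le_sq' hx₁.1.le hx₁.2.le
  have hpow : 1 ≤ x 0 ^ (-ε) :=
    Real.one_le_rpow_of_pos_of_le_one_of_nonpos hx₀.1 hx₀.2.le (by linarith)
  rw [hessDet_rpow_mul_half_sq_sub_one hx₀.1]
  calc ε / 4 ≤ hessFactor ε (x 1) := quarter_le_hessFactor hε₁ hx₁'
    _ ≤ hessFactor ε (x 1) * (x 0 ^ (-ε)) ^ 2 :=
      le_mul_of_one_le_right (hessFactor_nonneg (by linarith) hx₁') (one_le_pow₀ hpow)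
end

section
/- Let n ≥ 3 and define w : [0,1] × ℝ^{n−1} → ℝ by w(x₁, x') := x₁^{2/n}·(‖x'‖²/2 − 1). Then there exist ρ > 0 and λ > 0 such that w restricted to the closed cylinder [0,1] × closure(B_ρ^{n−1}) is convex, and det D²w(x) ≥ λ for every x in the open cylinder K_{1,ρ} = (0,1) × B_ρ^{n−1}. -/
/-!
Put `p = 2/n ≤ 2/3`, so that `w = profile p`. Then `w` is the pullback of
`G(t, y) = t^p (‖y‖²/2 - 1)` on `ℝ × ℝⁿ` along the linear map `x ↦ (x₁, x - x₁e₁)`. Along a segment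
with direction `(b, v)`, the second derivative of `G` is `t^(p-2)` times a quadratic form in
`(b, t)`. Its coefficients involve `‖y‖²`, `⟪y, v⟫` and `‖v‖²`, and by Cauchy–Schwarz the form is
nonnegative once `p‖y‖² ≤ (1 - p)(1 - ‖y‖²/2)`. This holds for `‖y‖ ≤ 1/2`.

Off the diagonal, the Hessian of `w` is nonzero only in the first row and column. Clearing the
first row gives `det D²w = x₁^(pn-2) (p(p-1)(|x'|²/2 - 1) - p²|x'|²)`. Since `pn = 2`, this does
not depend on `x₁`, and it is at least `p(7 - 9p)/8` when `|x'| < 1/2`.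
-/

open Set Metric MeasureTheory

theorem quadratic_form_nonneg_of_sq_le {A B d b t : ℝ} (hA : 0 ≤ A) (hd : 0 ≤ d)
    (hB : B ^ 2 ≤ A * d) : 0 ≤ A * b ^ 2 + 2 * B * b * t + d * t ^ 2 := by
  rcases hA.eq_or_lt with rfl | hA
  · obtain rfl : B = 0 := by nlinarith [sq_nonneg B]
    nlinarith [sq_nonneg t]
  · refine nonneg_of_mul_nonneg_right (a := A) ?_ hA
    nlinarith [sq_nonneg (A * b + B * t), mul_nonneg (sub_nonneg.2 hB) (sq_nonneg t)]

/-- The Hessian of `(t, y) ↦ t^p (‖y‖²/2 - 1)` in the direction `(b, v)`, divided by `t^(p-2)`,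
with `s = ‖y‖²`, `c = ⟪y, v⟫`, `d = ‖v‖²`. -/
theorem rpow_mul_norm_sq_hessian_nonneg {p s b c d t : ℝ} (hp : 0 ≤ p) (hs : 0 ≤ s)
    (hps : p * s ≤ (1 - p) * (1 - s / 2)) (hd : 0 ≤ d) (hc : c ^ 2 ≤ s * d) :
    0 ≤ p * (p - 1) * (s / 2 - 1) * b ^ 2 + 2 * (p * c) * b * t + d * t ^ 2 := by
  refine quadratic_form_nonneg_of_sq_le ?_ hd ?_
  · nlinarith [mul_nonneg hp hs]
  · nlinarith [mul_le_mul_of_nonneg_left hc (sq_nonneg p),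
      mul_le_mul_of_nonneg_left hps (mul_nonneg hp hd)]

theorem rpow_mul_norm_sq_second_deriv_nonneg {p s b c d t : ℝ} (ht : 0 < t) (hp : 0 ≤ p)
    (hs : 0 ≤ s) (hps : p * s ≤ (1 - p) * (1 - s / 2)) (hd : 0 ≤ d) (hc : c ^ 2 ≤ s * d) :
    0 ≤ p * ((p - 1) * t ^ (p - 1 - 1) * b) * b * (s / 2 - 1) + p * t ^ (p - 1) * b * c
      + (p * t ^ (p - 1) * b * c + t ^ p * d) := by
  have e1 : t ^ (p - 1) = t ^ (p - 2) * t := by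
    rw [← Real.rpow_add_one ht.ne']; ring_nf
  have e2 : t ^ p = t ^ (p - 2) * t ^ 2 := by
    rw [← Real.rpow_natCast, ← Real.rpow_add ht]; norm_num
  calc (0 : ℝ) ≤ t ^ (p - 2) * (p * (p - 1) * (s / 2 - 1) * b ^ 2 + 2 * (p * c) * b * t
        + d * t ^ 2) :=
        mul_nonneg (Real.rpow_nonneg ht.le _) (rpow_mul_norm_sq_hessian_nonneg hp hs hps hd hc)
    _ = _ := by rw [show p - 1 - 1 = p - 2 by ring, e1, e2]; ring

theorem convexOn_of_forall_segment {E : Type*} [AddCommGroup E] [Module ℝ E] {s : Set E}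
    {f : E → ℝ} (hs : Convex ℝ s)
    (h : ∀ x ∈ s, ∀ y ∈ s, ConvexOn ℝ (Icc 0 1) fun θ : ℝ => f (x + θ • (y - x))) :
    ConvexOn ℝ s f := by
  refine ⟨hs, fun x hx y hy a b ha hb hab => ?_⟩
  have := (h x hx y hy).2 (left_mem_Icc.2 zero_le_one) (right_mem_Icc.2 zero_le_one) ha hb hab
  have e : a • x + b • y = x + b • (y - x) := by
    rw [eq_sub_of_add_eq hab, smul_sub, sub_smul, one_smul]; abel
  simpa [e] using this

section InnerProductSpace

variable {F : Type*} [NormedAddCommGroup F] [InnerProductSpace ℝ F]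

theorem hasDerivAt_norm_sq_line_div_two (u v : F) (θ : ℝ) :
    HasDerivAt (fun θ : ℝ => ‖u + θ • v‖ ^ 2 / 2) (inner ℝ (u + θ • v) v) θ := by
  have hy : HasDerivAt (fun θ : ℝ => u + θ • v) v θ := by
    simpa using ((hasDerivAt_id θ).smul_const v).const_add u
  exact (hy.norm_sq.div_const 2).congr_deriv (by ring)

theorem hasDerivAt_inner_line (u v : F) (θ : ℝ) :
    HasDerivAt (fun θ : ℝ => inner ℝ (u + θ • v) v) (‖v‖ ^ 2) θ := by
  have hy : HasDerivAt (fun θ : ℝ => u + θ • v) v θ := by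
    simpa using ((hasDerivAt_id θ).smul_const v).const_add u
  exact (hy.inner ℝ (hasDerivAt_const θ v)).congr_deriv (by simp)

theorem convexOn_Icc_rpow_mul_norm_sq_line {p a b : ℝ} {u v : F} (hp : 0 < p) (ha : 0 ≤ a)
    (hab : 0 ≤ a + b)
    (hs : ∀ θ ∈ Ioo (0 : ℝ) 1, p * ‖u + θ • v‖ ^ 2 ≤ (1 - p) * (1 - ‖u + θ • v‖ ^ 2 / 2)) :
    ConvexOn ℝ (Icc 0 1) fun θ : ℝ => (a + θ * b) ^ p * (‖u + θ • v‖ ^ 2 / 2 - 1) := by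
  by_cases h0 : a = 0 ∧ b = 0
  · simpa [h0, Real.zero_rpow hp.ne'] using convexOn_const (0 : ℝ) (convex_Icc (0 : ℝ) 1)
  have hT : ∀ θ ∈ Ioo (0 : ℝ) 1, 0 < a + θ * b := by
    rintro θ ⟨h0θ, hθ1⟩
    by_contra! hle
    exact h0 ⟨by nlinarith, by nlinarith⟩
  have hR (θ : ℝ) := (hasDerivAt_norm_sq_line_div_two u v θ).sub_const 1
  have hTq (q θ : ℝ) (hθ : 0 < a + θ * b) :
      HasDerivAt (fun θ : ℝ => (a + θ * b) ^ q) (q * (a + θ * b) ^ (q - 1) * b) θ := by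
    have := ((hasDerivAt_id θ).mul_const b).const_add a
    simp only [id, one_mul] at this
    exact (Real.hasDerivAt_rpow_const (Or.inl hθ.ne')).comp θ this
  refine convexOn_of_hasDerivWithinAt2_nonneg (convex_Icc 0 1) ?_
    (f' := fun θ => p * (a + θ * b) ^ (p - 1) * b * (‖u + θ • v‖ ^ 2 / 2 - 1)
      + (a + θ * b) ^ p * inner ℝ (u + θ • v) v)
    (f'' := fun θ => p * ((p - 1) * (a + θ * b) ^ (p - 1 - 1) * b) * b * (‖u + θ • v‖ ^ 2 / 2 - 1)
      + p * (a + θ * b) ^ (p - 1) * b * inner ℝ (u + θ • v) v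
      + (p * (a + θ * b) ^ (p - 1) * b * inner ℝ (u + θ • v) v + (a + θ * b) ^ p * ‖v‖ ^ 2))
    ?_ ?_ ?_
  · exact Continuous.continuousOn <|
      ((continuous_const.add (continuous_id.mul continuous_const)).rpow_const
        fun _ => Or.inr hp.le).mul (by fun_prop)
  all_goals rw [interior_Icc]
  · intro θ hθ
    exact ((hTq p θ (hT θ hθ)).mul (hR θ)).hasDerivWithinAt
  · intro θ hθ
    exact ((((hTq (p - 1) θ (hT θ hθ)).const_mul p).mul_const b).mul (hR θ) |>.add
      ((hTq p θ (hT θ hθ)).mul (hasDerivAt_inner_line u v θ))).hasDerivWithinAt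
  · intro θ hθ
    have hcs : inner ℝ (u + θ • v) v ^ 2 ≤ ‖u + θ • v‖ ^ 2 * ‖v‖ ^ 2 := by
      simpa [sq, real_inner_self_eq_norm_sq] using real_inner_mul_inner_self_le (u + θ • v) v
    exact rpow_mul_norm_sq_second_deriv_nonneg (hT θ hθ) hp.le (sq_nonneg _) (hs θ hθ)
      (sq_nonneg _) hcs

theorem convexOn_rpow_mul_norm_sq_prod {p ρ : ℝ} (hp : 0 < p)
    (hpρ : p * ρ ^ 2 ≤ (1 - p) * (1 - ρ ^ 2 / 2)) :
    ConvexOn ℝ (Icc 0 1 ×ˢ closedBall (0 : F) ρ)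
      fun z : ℝ × F => z.1 ^ p * (‖z.2‖ ^ 2 / 2 - 1) := by
  have hconv := (convex_Icc (0 : ℝ) 1).prod (convex_closedBall (0 : F) ρ)
  refine convexOn_of_forall_segment hconv fun x hx y hy => ?_
  simp only [Prod.fst_add, Prod.snd_add, Prod.smul_fst, Prod.smul_snd, Prod.fst_sub,
    Prod.snd_sub, smul_eq_mul]
  refine convexOn_Icc_rpow_mul_norm_sq_line hp hx.1.1 (by linarith [hy.1.1]) fun θ hθ => ?_
  have hmem := (convex_closedBall (0 : F) ρ).add_smul_sub_mem hx.2 hy.2 (Ioo_subset_Icc_self hθ)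
  have hs : ‖x.2 + θ • (y.2 - x.2)‖ ^ 2 ≤ ρ ^ 2 :=
    pow_le_pow_left₀ (norm_nonneg _) (mem_closedBall_zero_iff.1 hmem) 2
  nlinarith [sq_nonneg ‖x.2 + θ • (y.2 - x.2)‖]

end InnerProductSpace

open Finset Matrix in
theorem det_eq_of_arrowhead_s12 {K : Type*} [Field K] {n : ℕ} [NeZero n]
    {A : Matrix (Fin n) (Fin n) K} {c : K} (hc : c ≠ 0) (hdiag : ∀ i ≠ 0, A i i = c)
    (hoff : ∀ i j, i ≠ 0 → j ≠ 0 → i ≠ j → A i j = 0) :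
    A.det = c ^ (n - 1) * (A 0 0 - ∑ i ∈ univ.erase 0, A 0 i * A i 0 / c) := by
  set k : Fin n → K := fun j => if j = 0 then 0 else A 0 j / c with hk
  -- `U * A` is `A` with `∑ₗ k l • (row l)` subtracted from row `0`, which clears that row
  set U : Matrix (Fin n) (Fin n) K := 1 - vecMulVec (Pi.single 0 1) k
  have hUA (i j : Fin n) : (U * A) i j = A i j - if i = 0 then ∑ l, k l * A l j else 0 := by
    simp [U, Matrix.sub_mul, vecMulVec_mul, vecMulVec_apply, vecMul, dotProduct, Pi.single_apply]
  have hU : U.det = 1 := by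
    rw [det_of_isUpperTriangular]
    · refine prod_eq_one fun i _ => ?_
      by_cases hi : i = 0 <;> simp [U, hi, hk, vecMulVec, Pi.single_apply]
    · intro i j hji
      replace hji : j < i := hji
      have : i ≠ 0 := fun h => by simp [h] at hji
      simp [U, vecMulVec, this, one_apply_ne (ne_of_lt hji).symm]
  have hrow (j : Fin n) (hj : j ≠ 0) : ∑ l, k l * A l j = A 0 j := by
    rw [sum_eq_single j]
    · simp [hk, hj, hdiag j hj, hc]
    · intro l _ hlj
      by_cases hl : l = 0
      · simp [hk, hl]
      · simp [hoff l j hl hj hlj]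
    · simp
  have hlow : (U * A).IsLowerTriangular := by
    intro i j hij
    replace hij : i < j := hij
    rw [hUA]
    have hj : j ≠ 0 := fun h => by simp [h] at hij
    by_cases hi : i = 0
    · subst hi; simp [hrow j hj]
    · simp [hi, hoff i j hi hj (ne_of_lt hij)]
  calc A.det = (U * A).det := by rw [det_mul, hU, one_mul]
    _ = (U * A) 0 0 * ∏ i ∈ univ.erase 0, (U * A) i i := by
      rw [det_of_isLowerTriangular _ hlow, mul_prod_erase _ (fun i => (U * A) i i) (mem_univ 0)]
    _ = _ := by
      rw [prod_congr rfl fun i hi => by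
          rw [hUA, if_neg (ne_of_mem_erase hi), sub_zero, hdiag i (ne_of_mem_erase hi)],
        prod_const, card_erase_of_mem (mem_univ 0), card_univ, Fintype.card_fin, hUA, if_pos rfl,
        ← add_sum_erase _ _ (mem_univ 0)]
      simp only [hk, if_pos rfl, zero_mul, zero_add]
      rw [sum_congr rfl fun i hi => by rw [if_neg (ne_of_mem_erase hi)]]
      simp only [div_mul_eq_mul_div]
      ring

section Profile

variable {n : ℕ} [NeZero n]

local notation "E" => EuclideanSpace ℝ (Fin n)

theorem coord0_eq_s12 (x : E) : coord0 x = x 0 := by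
  simp [coord0, Fin.val_eq_zero_iff]

open Finset Matrix in
theorem sqTail_eq_sum_erase (x : E) : sqTail x = ∑ i ∈ univ.erase 0, x i ^ 2 := by
  rw [sqTail, ← add_sum_erase _ _ (mem_univ (0 : Fin n))]
  simp only [Fin.val_eq_zero_iff, if_true, zero_add]
  exact sum_congr rfl fun i hi => if_neg (ne_of_mem_erase hi)

open Finset Matrix in
theorem sqTail_eq_norm_sq_sub_s12 (x : E) : sqTail x = ‖x‖ ^ 2 - x 0 ^ 2 := by
  rw [sqTail_eq_sum_erase, EuclideanSpace.real_norm_sq_eq,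
    ← add_sum_erase _ _ (mem_univ (0 : Fin n))]
  ring

theorem sqTail_eq_norm_sub_sq (x : E) : sqTail x = ‖x - x 0 • EuclideanSpace.single 0 1‖ ^ 2 := by
  rw [sqTail_eq_norm_sq_sub_s12, norm_sub_sq_real, inner_smul_right,
    EuclideanSpace.inner_single_right, norm_smul, PiLp.norm_single]
  simp
  ring

noncomputable def profile (p : ℝ) (y : E) : ℝ := coord0 y ^ p * (sqTail y / 2 - 1)

theorem convexOn_profile {p ρ : ℝ} (hp : 0 < p) (hρ : 0 ≤ ρ)
    (hpρ : p * ρ ^ 2 ≤ (1 - p) * (1 - ρ ^ 2 / 2)) :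
    ConvexOn ℝ {x : E | coord0 x ∈ Icc 0 1 ∧ sqTail x ≤ ρ ^ 2} (profile p) := by
  let L : E →ₗ[ℝ] ℝ × E := (EuclideanSpace.proj (0 : Fin n)).toLinearMap.prod
    (LinearMap.id - (EuclideanSpace.proj 0).toLinearMap.smulRight (EuclideanSpace.single 0 1))
  have hL (x : E) : L x = (x 0, x - x 0 • EuclideanSpace.single 0 1) := rfl
  have hset : {x : E | coord0 x ∈ Icc 0 1 ∧ sqTail x ≤ ρ ^ 2} =
      L ⁻¹' (Icc 0 1 ×ˢ closedBall 0 ρ) := by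
    ext x
    simp only [mem_ofPred_eq, mem_preimage, hL, mem_prod, mem_closedBall_zero_iff, coord0_eq_s12,
      sqTail_eq_norm_sub_sq, sq_le_sq₀ (norm_nonneg _) hρ]
  have hfun : profile p = (fun z : ℝ × E => z.1 ^ p * (‖z.2‖ ^ 2 / 2 - 1)) ∘ L := by
    ext x
    rw [profile, Function.comp_apply, hL, coord0_eq_s12, sqTail_eq_norm_sub_sq]
  rw [hset, hfun]
  exact (convexOn_rpow_mul_norm_sq_prod hp hpρ).comp_linearMap L

theorem hasFDerivAt_profile {p : ℝ} {x : E} (hx : x 0 ≠ 0) :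
    HasFDerivAt (profile p) (x 0 ^ p • (innerSL ℝ x - x 0 • EuclideanSpace.proj 0) +
      (p * x 0 ^ (p - 1) * (sqTail x / 2 - 1)) • EuclideanSpace.proj 0) x := by
  have hfun : profile p = fun y : E => y 0 ^ p * ((‖y‖ ^ 2 - y 0 ^ 2) * 2⁻¹ - 1) := by
    ext y; rw [profile, coord0_eq_s12, sqTail_eq_norm_sq_sub_s12, div_eq_mul_inv]
  have h0 := (EuclideanSpace.proj (0 : Fin n) : E →L[ℝ] ℝ).hasFDerivAt (x := x)
  refine (((h0.rpow_const (p := p) (Or.inl hx)).fun_mul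
      ((((hasFDerivAt_id x).norm_sq.fun_sub (h0.pow 2)).mul_const 2⁻¹).sub_const 1)
    ).congr_of_eventuallyEq (Filter.EventuallyEq.of_eq hfun)).congr_fderiv ?_
  ext v
  simp [sqTail_eq_norm_sq_sub_s12]
  ring

theorem fderiv_profile_single {p : ℝ} {x : E} (hx : x 0 ≠ 0) (j : Fin n) :
    fderiv ℝ (profile p) x (EuclideanSpace.single j 1) =
      if j = 0 then p * x 0 ^ (p - 1) * (sqTail x / 2 - 1) else x 0 ^ p * x j := by
  rw [(hasFDerivAt_profile hx).fderiv]
  rcases eq_or_ne j 0 with rfl | hj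
  · simp [EuclideanSpace.inner_single_right]
  · simp [hj, EuclideanSpace.inner_single_right, Ne.symm hj]

theorem eventually_ne_coord_zero {x : E} (hx : x 0 ≠ 0) : ∀ᶠ y in nhds x, y 0 ≠ 0 :=
  (EuclideanSpace.proj (0 : Fin n) : E →L[ℝ] ℝ).continuous.continuousAt.eventually_ne hx

theorem fderiv_fderiv_profile_zero {p : ℝ} {x : E} (hx : x 0 ≠ 0) :
    fderiv ℝ (fun y => fderiv ℝ (profile p) y (EuclideanSpace.single 0 1)) x =
      p • fderiv ℝ (profile (p - 1)) x := by
  have : (fun y => fderiv ℝ (profile p) y (EuclideanSpace.single 0 1)) =ᶠ[nhds x]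
      fun y => p * profile (p - 1) y := by
    filter_upwards [eventually_ne_coord_zero hx] with y hy
    rw [fderiv_profile_single hy, if_pos rfl, profile, coord0_eq_s12, mul_assoc]
  rw [this.fderiv_eq, fderiv_const_mul (hasFDerivAt_profile hx).differentiableAt]

theorem fderiv_fderiv_profile_of_ne {p : ℝ} {x : E} (hx : x 0 ≠ 0) {i : Fin n} (hi : i ≠ 0)
    (j : Fin n) :
    fderiv ℝ (fun y => fderiv ℝ (profile p) y (EuclideanSpace.single i 1)) x
        (EuclideanSpace.single j 1) =
      (if i = j then x 0 ^ p else 0) + if j = 0 then p * x 0 ^ (p - 1) * x i else 0 := by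
  have : (fun y => fderiv ℝ (profile p) y (EuclideanSpace.single i 1)) =ᶠ[nhds x]
      fun y => y 0 ^ p * y i := by
    filter_upwards [eventually_ne_coord_zero hx] with y hy
    rw [fderiv_profile_single hy, if_neg hi]
  have h0 := (EuclideanSpace.proj (0 : Fin n) : E →L[ℝ] ℝ).hasFDerivAt (x := x)
  have hd : HasFDerivAt (fun y : E => y 0 ^ p * y i) _ x :=
    (h0.rpow_const (p := p) (Or.inl hx)).fun_mul (EuclideanSpace.proj i : E →L[ℝ] ℝ).hasFDerivAt
  rw [this.fderiv_eq, hd.fderiv]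
  simp [PiLp.single_apply, eq_comm (a := (0 : Fin n))]
  congr 1
  ring

open Finset Matrix in
theorem hessDet_profile {p : ℝ} {x : E} (hx : 0 < x 0) :
    hessDet (profile p) x =
      x 0 ^ (p * n - 2) * (p * (p - 1) * (sqTail x / 2 - 1) - p ^ 2 * sqTail x) := by
  have hc : x 0 ^ p ≠ 0 := (Real.rpow_pos_of_pos hx p).ne'
  rw [hessDet, det_eq_of_arrowhead_s12 hc]
  · simp only [of_apply, fderiv_fderiv_profile_zero hx.ne', _root_.smul_apply,
      fderiv_profile_single hx.ne', ↓reduceIte, smul_eq_mul]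
    rw [sum_congr rfl (g := fun i => p ^ 2 * (x 0 ^ (p - 1)) ^ 2 / x 0 ^ p * x i ^ 2)
        fun i hi => by
          simp [fderiv_fderiv_profile_of_ne hx.ne' (ne_of_mem_erase hi), ne_of_mem_erase hi]
          ring,
      ← mul_sum, ← sqTail_eq_sum_erase]
    generalize x 0 = t at hx ⊢
    have e1 : t ^ (p - 1) = t ^ (p - 2) * t := by rw [← Real.rpow_add_one hx.ne']; ring_nf
    have e2 : t ^ p = t ^ (p - 2) * t ^ 2 := by
      rw [← Real.rpow_natCast, ← Real.rpow_add hx]; norm_num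
    have e3 : t ^ (p * n - 2) = (t ^ p) ^ (n - 1) * t ^ (p - 2) := by
      rw [← Real.rpow_natCast, ← Real.rpow_mul hx.le, ← Real.rpow_add hx,
        Nat.cast_sub (Nat.one_le_iff_ne_zero.mpr (NeZero.ne n))]
      ring_nf
    have ht : t ^ (p - 2) ≠ 0 := (Real.rpow_pos_of_pos hx _).ne'
    rw [show p - 1 - 1 = p - 2 by ring, e3, e1, e2]
    field_simp
  · intro i hi
    simp [fderiv_fderiv_profile_of_ne hx.ne' hi, hi]
  · intro i j hi hj hij
    simp [fderiv_fderiv_profile_of_ne hx.ne' hi, hij, hj]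

end Profile

/-- For `n ≥ 3` and `w(x₁, x') = x₁^{2/n}·(‖x'‖²/2 - 1)`, there exist `ρ > 0` and `λ > 0`
such that `w` is convex on `[0,1] × closure(B_ρ^{n-1})` and `det D²w ≥ λ` on
`(0,1) × B_ρ^{n-1}`. -/
theorem convex_and_hessDet_lower_bound (n : ℕ) (hn : 3 ≤ n) :
    ∃ ρ > (0 : ℝ), ∃ lam > (0 : ℝ),
      ConvexOn ℝ {x : EuclideanSpace ℝ (Fin n) | coord0 x ∈ Icc (0 : ℝ) 1 ∧ sqTail x ≤ ρ ^ 2}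
          (fun x => coord0 x ^ ((2 : ℝ) / n) * (sqTail x / 2 - 1)) ∧
        ∀ x : EuclideanSpace ℝ (Fin n), coord0 x ∈ Ioo (0 : ℝ) 1 → sqTail x < ρ ^ 2 →
          lam ≤ hessDet (fun y => coord0 y ^ ((2 : ℝ) / n) * (sqTail y / 2 - 1)) x := by
  have : NeZero n := ⟨by omega⟩
  have hn' : (3 : ℝ) ≤ n := by exact_mod_cast hn
  set p : ℝ := 2 / n with hp_def
  have hp : 0 < p := by positivity
  have hp23 : p ≤ 2 / 3 := by
    rw [hp_def, div_le_div_iff₀ (by linarith) (by norm_num)]; linarith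
  refine ⟨1 / 2, by norm_num, p * (7 - 9 * p) / 8, by nlinarith,
    convexOn_profile (ρ := 1 / 2) hp (by norm_num) (by nlinarith), fun x hx hs => ?_⟩
  rw [coord0_eq_s12] at hx
  change _ ≤ hessDet (profile p) x
  have hpn : p * n - 2 = 0 := by rw [hp_def]; field_simp; ring
  rw [hessDet_profile hx.1, hpn, Real.rpow_zero, one_mul]
  have hs0 : 0 ≤ sqTail x := by rw [sqTail_eq_norm_sub_sq]; positivity
  nlinarith
end

section
/- Define w̄ : (0,1) × (−√2, √2) → ℝ by w̄(x₁, x₂) := x₁·(1/2 − ln x₁)^{1/2} · (x₂²/2 − 1). Then for every (x₁, x₂) in the domain, the determinant of the Hessian of w̄ satisfies det D²w̄(x₁, x₂) ≤ 1. -/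
/-! For a separable function `u(x₁) v(x₂)` the Hessian determinant is `u u'' v v'' - (u' v')²`.
Here `v(s) = s²/2 - 1` has `v'' = 1`, while `u(t) = t √A` with `A = 1/2 - ln t` has
`u' = √A - 1/(2√A)` and `u u'' = -(1 + 1/(2A))/2`. So the determinant is
`(1 + 1/(2A))/2 · (1 - x₂²/2) - (u' x₂)² ≤ (1 + 1/(2A))/2`, and this is at most `1` since
`A ≥ 1/2` on `(0, 1)`. -/

open Set Metric MeasureTheory

open Filter Topology Real

section SeparableProduct

variable {u v : ℝ → ℝ} {u' v' : ℝ} {y : EuclideanSpace ℝ (Fin 2)}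

theorem hasFDerivAt_mul_comp_proj (hu : HasDerivAt u u' (y 0)) (hv : HasDerivAt v v' (y 1)) :
    HasFDerivAt (fun z : EuclideanSpace ℝ (Fin 2) => u (z 0) * v (z 1))
      ((u' * v (y 1)) • EuclideanSpace.proj (𝕜 := ℝ) 0 + (u (y 0) * v') • EuclideanSpace.proj 1)
      y := by
  have h := (hu.comp_hasFDerivAt y (EuclideanSpace.proj (𝕜 := ℝ) (ι := Fin 2) 0).hasFDerivAt).mul
    (hv.comp_hasFDerivAt y (EuclideanSpace.proj (𝕜 := ℝ) (ι := Fin 2) 1).hasFDerivAt)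
  refine h.congr_fderiv ?_
  ext z
  simp
  ring

theorem fderiv_mul_comp_proj_single_zero (hu : HasDerivAt u u' (y 0))
    (hv : HasDerivAt v v' (y 1)) :
    fderiv ℝ (fun z : EuclideanSpace ℝ (Fin 2) => u (z 0) * v (z 1)) y
      (EuclideanSpace.single 0 1) = u' * v (y 1) := by
  simp [(hasFDerivAt_mul_comp_proj hu hv).fderiv]

theorem fderiv_mul_comp_proj_single_one (hu : HasDerivAt u u' (y 0))
    (hv : HasDerivAt v v' (y 1)) :
    fderiv ℝ (fun z : EuclideanSpace ℝ (Fin 2) => u (z 0) * v (z 1)) y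
      (EuclideanSpace.single 1 1) = u (y 0) * v' := by
  simp [(hasFDerivAt_mul_comp_proj hu hv).fderiv]

end SeparableProduct

theorem hessDet_mul_comp_proj {u u' v v' : ℝ → ℝ} {u'' v'' : ℝ} {x : EuclideanSpace ℝ (Fin 2)}
    (hu : ∀ᶠ t in 𝓝 (x 0), HasDerivAt u (u' t) t) (hu' : HasDerivAt u' u'' (x 0))
    (hv : ∀ᶠ s in 𝓝 (x 1), HasDerivAt v (v' s) s) (hv' : HasDerivAt v' v'' (x 1)) :
    hessDet (fun y => u (y 0) * v (y 1)) x
      = u'' * v (x 1) * (u (x 0) * v'') - (u' (x 0) * v' (x 1)) ^ 2 := by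
  have hcoord (i : Fin 2) : Tendsto (fun y : EuclideanSpace ℝ (Fin 2) => y i) (𝓝 x) (𝓝 (x i)) :=
    (EuclideanSpace.proj (𝕜 := ℝ) i).continuous.tendsto x
  have huv : ∀ᶠ y in 𝓝 x, HasDerivAt u (u' (y 0)) (y 0) ∧ HasDerivAt v (v' (y 1)) (y 1) :=
    (hcoord 0 |>.eventually hu).and (hcoord 1 |>.eventually hv)
  have hpartial0 : (fun y => fderiv ℝ (fun z => u (z 0) * v (z 1)) y (EuclideanSpace.single 0 1))
      =ᶠ[𝓝 x] fun y => u' (y 0) * v (y 1) :=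
    huv.mono fun y hy => fderiv_mul_comp_proj_single_zero hy.1 hy.2
  have hpartial1 : (fun y => fderiv ℝ (fun z => u (z 0) * v (z 1)) y (EuclideanSpace.single 1 1))
      =ᶠ[𝓝 x] fun y => u (y 0) * v' (y 1) :=
    huv.mono fun y hy => fderiv_mul_comp_proj_single_one hy.1 hy.2
  obtain ⟨hu₀, hv₀⟩ := huv.self_of_nhds
  rw [hessDet, Matrix.det_fin_two]
  simp only [Matrix.of_apply]
  rw [hpartial0.fderiv_eq, hpartial1.fderiv_eq,
    fderiv_mul_comp_proj_single_zero hu' hv₀, fderiv_mul_comp_proj_single_one hu' hv₀,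
    fderiv_mul_comp_proj_single_zero hu₀ hv', fderiv_mul_comp_proj_single_one hu₀ hv']
  ring

section SqrtLogProfile

variable {t : ℝ}

theorem one_half_le_half_sub_log (ht : t ∈ Ioo 0 1) : 1 / 2 ≤ 1 / 2 - log t := by
  linarith [log_nonpos ht.1.le ht.2.le]

theorem hasDerivAt_sqrt_half_sub_log (ht : 0 < t) (hA : 0 < 1 / 2 - log t) :
    HasDerivAt (fun t => √(1 / 2 - log t)) (-1 / (2 * t * √(1 / 2 - log t))) t := by
  have h := ((hasDerivAt_log ht.ne').const_sub (1 / 2)).sqrt hA.ne'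
  refine h.congr_deriv ?_
  field_simp

theorem hasDerivAt_mul_sqrt_half_sub_log (ht : 0 < t) (hA : 0 < 1 / 2 - log t) :
    HasDerivAt (fun t => t * √(1 / 2 - log t))
      (√(1 / 2 - log t) - 1 / (2 * √(1 / 2 - log t))) t := by
  have hS : 0 < √(1 / 2 - log t) := sqrt_pos.2 hA
  refine ((hasDerivAt_id' t).mul (hasDerivAt_sqrt_half_sub_log ht hA)).congr_deriv ?_
  field_simp
  ring

theorem hasDerivAt_sqrt_half_sub_log_sub_inv (ht : 0 < t) (hA : 0 < 1 / 2 - log t) :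
    HasDerivAt (fun t => √(1 / 2 - log t) - 1 / (2 * √(1 / 2 - log t)))
      (-(1 + 1 / (2 * (1 / 2 - log t))) / (2 * t * √(1 / 2 - log t))) t := by
  have hS : 0 < √(1 / 2 - log t) := sqrt_pos.2 hA
  have h := hasDerivAt_sqrt_half_sub_log ht hA
  refine (h.sub ((hasDerivAt_const t 1).div (h.const_mul 2) (by positivity))).congr_deriv ?_
  set S := √(1 / 2 - log t)
  have hS2 : S ^ 2 = 1 / 2 - log t := sq_sqrt hA.le
  rw [← hS2]
  field_simp
  ring

end SqrtLogProfile

/-- For `w̄(x₁, x₂) = x₁·(1/2 - ln x₁)^{1/2}·(x₂²/2 - 1)` on `(0,1) × (-√2, √2)`, the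
Hessian determinant is at most `1`. -/
theorem hessDet_upper_bound_dim_two :
    ∀ x : EuclideanSpace ℝ (Fin 2),
      x 0 ∈ Ioo (0 : ℝ) 1 → x 1 ∈ Ioo (-Real.sqrt 2) (Real.sqrt 2) →
        hessDet
            (fun y => y 0 * Real.sqrt (1 / 2 - Real.log (y 0)) * (y 1 ^ 2 / 2 - 1)) x ≤ 1 := by
  intro x hx _
  have hA₀ := one_half_le_half_sub_log hx
  have hu : ∀ᶠ t in 𝓝 (x 0), HasDerivAt (fun t => t * √(1 / 2 - log t))
      (√(1 / 2 - log t) - 1 / (2 * √(1 / 2 - log t))) t :=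
    eventually_of_mem (Ioo_mem_nhds hx.1 hx.2) fun t ht =>
      hasDerivAt_mul_sqrt_half_sub_log ht.1 (by linarith [one_half_le_half_sub_log ht])
  have hv (s : ℝ) : HasDerivAt (fun s : ℝ => s ^ 2 / 2 - 1) s s := by
    simpa using ((hasDerivAt_pow 2 s).div_const 2).sub_const 1
  rw [hessDet_mul_comp_proj hu
    (hasDerivAt_sqrt_half_sub_log_sub_inv hx.1 (by linarith))
    (.of_forall hv) (hasDerivAt_id' (x 1))]
  set A := 1 / 2 - log (x 0)
  have hS : 0 < √A := sqrt_pos.2 (by linarith)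
  have huu'' : -(1 + 1 / (2 * A)) / (2 * x 0 * √A) * (x 0 * √A) = -(1 + 1 / (2 * A)) / 2 := by
    field_simp [hx.1.ne']
  have hinv : 1 / (2 * A) ≤ 1 := by
    rw [div_le_one (by linarith)]
    linarith
  calc _ = (1 + 1 / (2 * A)) / 2 * (1 - x 1 ^ 2 / 2) - ((√A - 1 / (2 * √A)) * x 1) ^ 2 := by
        linear_combination (x 1 ^ 2 / 2 - 1) * huu''
    _ ≤ (1 + 1 / (2 * A)) / 2 := by
        have hinv₀ : 0 ≤ 1 / (2 * A) := one_div_nonneg.2 (by linarith)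
        nlinarith [mul_nonneg hinv₀ (sq_nonneg (x 1)), sq_nonneg ((√A - 1 / (2 * √A)) * x 1)]
    _ ≤ 1 := by linarith
end
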